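/- arXiv:math/0201304 — 9 statements merged into one kernel-verified Lean document; each statement's English description precedes it below -/
import Mathlib

section
/- In the free algebra P, the two-sided ideal generated by the elements σ_k − σ_k^g, for k = 1,…,n and g ∈ G, is equal to the two-sided ideal generated by the commutators [x_i, σ_k], for 1 ≤ i, k ≤ n. Equivalently, the set of relations {σ_k^g = σ_k : 1 ≤ k ≤ n, g ∈ G} is equivalent to the set of relations {x_iσ_k = σ_kx_i : 1 ≤ i, k ≤ n}. -/
open Finset

/-- The `k`-th elementary polynomial `σ_k` in the noncommuting variables
`x_1, …, x_n` of the free algebra `K⟨x_1,…,x_n⟩`: the sum, over all `k`-element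
subsets of the index set, of the product of the corresponding generators taken
in increasing order of the indices.  (`σ_0 = 1` and `σ_k = 0` for `k > n`.) -/
noncomputable def elemPoly (K : Type*) [Field K] (n k : ℕ) : FreeAlgebra K (Fin n) :=
  ∑ s ∈ Finset.univ.powersetCard k, ((s.sort (· ≤ ·)).map (FreeAlgebra.ι K)).prod

/-- The generator of the group `G` of circular permutations, acting as the
`K`-algebra automorphism of the free algebra sending `x_i` to `x_{i+1}` (mod `n`). -/
noncomputable def rotHom (K : Type*) [Field K] (n : ℕ) :
    FreeAlgebra K (Fin n) →ₐ[K] FreeAlgebra K (Fin n) :=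
  FreeAlgebra.lift K fun i => FreeAlgebra.ι K (finRotate n i)

/-- The elementary polynomial on an explicit list of (indices of) variables. -/
noncomputable def esym (K : Type*) [Field K] {n : ℕ} : ℕ → List (Fin n) → FreeAlgebra K (Fin n)
  | 0, _ => 1
  | _+1, [] => 0
  | k+1, a :: l => FreeAlgebra.ι K a * esym K k l + esym K (k+1) l

section esymLemmas

variable (K : Type*) [Field K] {n : ℕ}

@[simp] lemma esym_zero (l : List (Fin n)) : esym K 0 l = 1 := by cases l <;> rfl
@[simp] lemma esym_nil (k : ℕ) : esym K (k+1) ([] : List (Fin n)) = 0 := rfl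
@[simp] lemma esym_cons (k : ℕ) (a : Fin n) (l : List (Fin n)) :
    esym K (k+1) (a :: l) = FreeAlgebra.ι K a * esym K k l + esym K (k+1) l := rfl

lemma esym_eq_zero {k : ℕ} {l : List (Fin n)} (h : l.length < k) : esym K k l = 0 := by
  induction l generalizing k with
  | nil => cases k with
    | zero => simp at h
    | succ k => simp
  | cons a l ih =>
    cases k with
    | zero => simp at h
    | succ k =>
      simp only [List.length_cons, Nat.succ_lt_succ_iff] at h
      simp [ih h, ih (h.trans (Nat.lt_succ_self _))]

lemma esym_append (k : ℕ) (a : Fin n) (l : List (Fin n)) :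
    esym K (k+1) (l ++ [a]) = esym K (k+1) l + esym K k l * FreeAlgebra.ι K a := by
  induction l generalizing k with
  | nil => cases k <;> simp
  | cons b l ih =>
    cases k with
    | zero => simp [ih]; abel
    | succ k => simp only [List.cons_append, esym_cons, ih]; noncomm_ring

lemma esym_map (φ : FreeAlgebra K (Fin n) →ₐ[K] FreeAlgebra K (Fin n)) (f : Fin n → Fin n)
    (hφ : ∀ i, φ (FreeAlgebra.ι K i) = FreeAlgebra.ι K (f i)) (k : ℕ) (l : List (Fin n)) :
    φ (esym K k l) = esym K k (l.map f) := by
  induction l generalizing k with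
  | nil => cases k <;> simp
  | cons a l ih =>
    cases k with
    | zero => simp
    | succ k => simp [map_add, map_mul, hφ, ih]

lemma sum_powersetCard_sorted (l : List (Fin n)) (hl : l.Pairwise (· < ·)) (k : ℕ) :
    ∑ s ∈ l.toFinset.powersetCard k, ((s.sort (· ≤ ·)).map (FreeAlgebra.ι K)).prod
      = esym K k l := by
  induction l generalizing k with
  | nil =>
    cases k with
    | zero => simp
    | succ k =>
      rw [List.toFinset_nil, Finset.powersetCard_eq_empty.mpr (by simp)]
      simp
  | cons a l ih =>
    have hl' : l.Pairwise (· < ·) := (List.pairwise_cons.mp hl).2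
    have hal : ∀ b ∈ l.toFinset, a < b := fun b hb =>
      (List.pairwise_cons.mp hl).1 b (List.mem_toFinset.mp hb)
    have ha : a ∉ l.toFinset := fun h => lt_irrefl a (hal a h)
    cases k with
    | zero => simp
    | succ k =>
      rw [List.toFinset_cons, Finset.powersetCard_succ_insert ha, Finset.sum_union,
        Finset.sum_image]
      · have key : ∀ t ∈ Finset.powersetCard k l.toFinset,
            (((insert a t).sort (· ≤ ·)).map (FreeAlgebra.ι K)).prod
              = FreeAlgebra.ι K a * ((t.sort (· ≤ ·)).map (FreeAlgebra.ι K)).prod := by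
          intro t ht
          have hts := (Finset.mem_powersetCard.mp ht).1
          rw [Finset.sort_insert _ (fun b hb => (hal b (hts hb)).le) (fun h => ha (hts h))]
          simp
        rw [Finset.sum_congr rfl key, ← Finset.mul_sum, ih hl', ih hl', esym_cons, add_comm]
      · intro x hx y hy hxy
        have hax : a ∉ x := fun h => ha ((Finset.mem_powersetCard.mp hx).1 h)
        have hay : a ∉ y := fun h => ha ((Finset.mem_powersetCard.mp hy).1 h)
        rw [← Finset.erase_insert hax, ← Finset.erase_insert hay, hxy]
      · rw [Finset.disjoint_left]
        intro t ht ht'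
        obtain ⟨u, hu, rfl⟩ := Finset.mem_image.mp ht'
        exact ha ((Finset.mem_powersetCard.mp ht).1 (Finset.mem_insert_self a u))

lemma elemPoly_eq_esym (k : ℕ) : elemPoly K n k = esym K k (List.finRange n) := by
  rw [elemPoly, ← List.toFinset_finRange n]
  exact sum_powersetCard_sorted K _ (List.pairwise_lt_finRange n) k

lemma finRange_map_finRotate (m : ℕ) :
    (List.finRange (m+1)).map (finRotate (m+1))
      = (List.finRange m).map Fin.succ ++ [0] := by
  rw [List.finRange_succ_last, List.map_append, List.map_map]
  congr 1
  · apply List.map_congr_left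
    intro i _
    show finRotate (m+1) i.castSucc = i.succ
    rw [finRotate_succ_apply, Fin.coeSucc_eq_succ]
  · simp [finRotate_last]

end esymLemmas

/-- In the free algebra `P = K⟨x_1,…,x_n⟩`, the two-sided ideal generated by the
elements `σ_k − σ_k^g` (for `1 ≤ k ≤ n` and `g ∈ G`, i.e. `g` a power of the
circular permutation) equals the two-sided ideal generated by the commutators
`[x_i, σ_k] = x_i σ_k − σ_k x_i` for `1 ≤ i, k ≤ n`. -/
theorem elemPoly_circularInvariance_ideal_eq_commutator_ideal
    (K : Type*) [Field K] [CharZero K] (n : ℕ) (hn : 3 ≤ n) :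
    TwoSidedIdeal.span {p : FreeAlgebra K (Fin n) | ∃ (k m : ℕ), 1 ≤ k ∧ k ≤ n ∧
        p = elemPoly K n k - (⇑(rotHom K n))^[m] (elemPoly K n k)} =
    TwoSidedIdeal.span {p : FreeAlgebra K (Fin n) | ∃ (i : Fin n) (k : ℕ), 1 ≤ k ∧ k ≤ n ∧
        p = FreeAlgebra.ι K i * elemPoly K n k - elemPoly K n k * FreeAlgebra.ι K i} := by
  obtain ⟨m, rfl⟩ : ∃ m, n = m + 1 := ⟨n - 1, by omega⟩
  set T : List (Fin (m+1)) := (List.finRange m).map Fin.succ with hT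
  have hrotι : ∀ i, rotHom K (m+1) (FreeAlgebra.ι K i)
      = FreeAlgebra.ι K (finRotate (m+1) i) := fun i => FreeAlgebra.lift_ι_apply _ _
  have hσ : ∀ k : ℕ, elemPoly K (m+1) (k+1)
      = FreeAlgebra.ι K 0 * esym K k T + esym K (k+1) T := by
    intro k
    rw [elemPoly_eq_esym, List.finRange_succ, esym_cons]
  have hrotσ : ∀ k : ℕ, rotHom K (m+1) (elemPoly K (m+1) (k+1))
      = esym K (k+1) T + esym K k T * FreeAlgebra.ι K 0 := by
    intro k
    rw [elemPoly_eq_esym, esym_map K _ (finRotate (m+1)) hrotι, finRange_map_finRotate,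
      esym_append]
  have hdiff : ∀ k : ℕ, elemPoly K (m+1) (k+1) - rotHom K (m+1) (elemPoly K (m+1) (k+1))
      = FreeAlgebra.ι K 0 * esym K k T - esym K k T * FreeAlgebra.ι K 0 := by
    intro k; rw [hrotσ k, hσ k]; abel
  set I := TwoSidedIdeal.span {p : FreeAlgebra K (Fin (m+1)) | ∃ (k mm : ℕ), 1 ≤ k ∧ k ≤ m+1 ∧
      p = elemPoly K (m+1) k - (⇑(rotHom K (m+1)))^[mm] (elemPoly K (m+1) k)} with hI
  set J := TwoSidedIdeal.span {p : FreeAlgebra K (Fin (m+1)) | ∃ (i : Fin (m+1)) (k : ℕ),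
      1 ≤ k ∧ k ≤ m+1 ∧
      p = FreeAlgebra.ι K i * elemPoly K (m+1) k - elemPoly K (m+1) k * FreeAlgebra.ι K i}
    with hJ
  have hgen1 : ∀ (k mm : ℕ), 1 ≤ k → k ≤ m+1 →
      elemPoly K (m+1) k - (⇑(rotHom K (m+1)))^[mm] (elemPoly K (m+1) k) ∈ I :=
    fun k mm h1 h2 => TwoSidedIdeal.subset_span ⟨k, mm, h1, h2, rfl⟩
  have hgen1' : ∀ k : ℕ, 1 ≤ k → k ≤ m+1 →
      elemPoly K (m+1) k - rotHom K (m+1) (elemPoly K (m+1) k) ∈ I := by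
    intro k h1 h2
    have := hgen1 k 1 h1 h2
    rwa [Function.iterate_one] at this
  have hgen2 : ∀ (i : Fin (m+1)) (k : ℕ), 1 ≤ k → k ≤ m+1 →
      FreeAlgebra.ι K i * elemPoly K (m+1) k - elemPoly K (m+1) k * FreeAlgebra.ι K i ∈ J :=
    fun i k h1 h2 => TwoSidedIdeal.subset_span ⟨i, k, h1, h2, rfl⟩
  -- commutators of `ι 0` with `esym _ T` lie in `J`
  have hJe : ∀ k : ℕ, k ≤ m →
      FreeAlgebra.ι K 0 * esym K k T - esym K k T * FreeAlgebra.ι K 0 ∈ J := by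
    intro k
    induction k with
    | zero => intro _; simp only [esym_zero, mul_one, one_mul, sub_self]; exact J.zero_mem
    | succ k ih =>
      intro hk
      have he : esym K (k+1) T
          = elemPoly K (m+1) (k+1) - FreeAlgebra.ι K 0 * esym K k T := by
        rw [hσ k]; abel
      rw [he]
      have heq : FreeAlgebra.ι K 0 * (elemPoly K (m+1) (k+1) - FreeAlgebra.ι K 0 * esym K k T)
            - (elemPoly K (m+1) (k+1) - FreeAlgebra.ι K 0 * esym K k T) * FreeAlgebra.ι K 0
          = (FreeAlgebra.ι K 0 * elemPoly K (m+1) (k+1)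
              - elemPoly K (m+1) (k+1) * FreeAlgebra.ι K 0)
            - FreeAlgebra.ι K 0 *
              (FreeAlgebra.ι K 0 * esym K k T - esym K k T * FreeAlgebra.ι K 0) := by
        noncomm_ring
      rw [heq]
      exact J.sub_mem (hgen2 0 (k+1) (by omega) (by omega))
        (J.mul_mem_left _ _ (ih (by omega)))
  -- the differences `σ_k - g σ_k` lie in `J`
  have hJd : ∀ k : ℕ, 1 ≤ k → k ≤ m+1 →
      elemPoly K (m+1) k - rotHom K (m+1) (elemPoly K (m+1) k) ∈ J := by
    rintro (_ | k) h1 h2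
    · omega
    · rw [hdiff k]; exact hJe k (by omega)
  -- `J` is stable under `rot`
  have hJrot : ∀ x ∈ J, rotHom K (m+1) x ∈ J := by
    intro x hx
    have hsub : {p : FreeAlgebra K (Fin (m+1)) | ∃ (i : Fin (m+1)) (k : ℕ),
        1 ≤ k ∧ k ≤ m+1 ∧
        p = FreeAlgebra.ι K i * elemPoly K (m+1) k - elemPoly K (m+1) k * FreeAlgebra.ι K i}
        ⊆ (TwoSidedIdeal.comap (rotHom K (m+1)) J : Set (FreeAlgebra K (Fin (m+1)))) := by
      rintro p ⟨i, k, h1, h2, rfl⟩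
      rw [SetLike.mem_coe, TwoSidedIdeal.mem_comap]
      rw [map_sub, map_mul, map_mul, hrotι]
      set i' := finRotate (m+1) i
      have heq : FreeAlgebra.ι K i' * rotHom K (m+1) (elemPoly K (m+1) k)
            - rotHom K (m+1) (elemPoly K (m+1) k) * FreeAlgebra.ι K i'
          = (FreeAlgebra.ι K i' * elemPoly K (m+1) k
              - elemPoly K (m+1) k * FreeAlgebra.ι K i')
            - (FreeAlgebra.ι K i' *
                (elemPoly K (m+1) k - rotHom K (m+1) (elemPoly K (m+1) k))
              - (elemPoly K (m+1) k - rotHom K (m+1) (elemPoly K (m+1) k))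
                * FreeAlgebra.ι K i') := by
        noncomm_ring
      rw [heq]
      exact J.sub_mem (hgen2 i' k h1 h2)
        (J.sub_mem (J.mul_mem_left _ _ (hJd k h1 h2)) (J.mul_mem_right _ _ (hJd k h1 h2)))
    have := TwoSidedIdeal.mem_span_iff.mp hx (TwoSidedIdeal.comap (rotHom K (m+1)) J) hsub
    rwa [TwoSidedIdeal.mem_comap] at this
  have hJrotIter : ∀ (mm : ℕ) (x), x ∈ J → (⇑(rotHom K (m+1)))^[mm] x ∈ J := by
    intro mm
    induction mm with
    | zero => intro x hx; simpa using hx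
    | succ mm ih =>
      intro x hx
      rw [Function.iterate_succ_apply']
      exact hJrot _ (ih x hx)
  -- `I` is stable under `rot`
  have hIrot : ∀ x ∈ I, rotHom K (m+1) x ∈ I := by
    intro x hx
    have hsub : {p : FreeAlgebra K (Fin (m+1)) | ∃ (k mm : ℕ), 1 ≤ k ∧ k ≤ m+1 ∧
        p = elemPoly K (m+1) k - (⇑(rotHom K (m+1)))^[mm] (elemPoly K (m+1) k)}
        ⊆ (TwoSidedIdeal.comap (rotHom K (m+1)) I : Set (FreeAlgebra K (Fin (m+1)))) := by
      rintro p ⟨k, mm, h1, h2, rfl⟩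
      rw [SetLike.mem_coe, TwoSidedIdeal.mem_comap, map_sub]
      have hiter : rotHom K (m+1) ((⇑(rotHom K (m+1)))^[mm] (elemPoly K (m+1) k))
          = (⇑(rotHom K (m+1)))^[mm+1] (elemPoly K (m+1) k) := by
        rw [Function.iterate_succ_apply']
      rw [hiter]
      have heq : rotHom K (m+1) (elemPoly K (m+1) k)
            - (⇑(rotHom K (m+1)))^[mm+1] (elemPoly K (m+1) k)
          = (elemPoly K (m+1) k - (⇑(rotHom K (m+1)))^[mm+1] (elemPoly K (m+1) k))
            - (elemPoly K (m+1) k - rotHom K (m+1) (elemPoly K (m+1) k)) := by abel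
      rw [heq]
      exact I.sub_mem (hgen1 k (mm+1) h1 h2) (hgen1' k h1 h2)
    have := TwoSidedIdeal.mem_span_iff.mp hx (TwoSidedIdeal.comap (rotHom K (m+1)) I) hsub
    rwa [TwoSidedIdeal.mem_comap] at this
  -- commutators of `ι 0` with `esym _ T` lie in `I`
  have hIe : ∀ k : ℕ,
      FreeAlgebra.ι K 0 * esym K k T - esym K k T * FreeAlgebra.ι K 0 ∈ I := by
    intro k
    rcases Nat.lt_or_ge k (m+1) with hk | hk
    · rw [← hdiff k]
      exact hgen1' (k+1) (by omega) (by omega)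
    · have : esym K k T = 0 := esym_eq_zero K (by simp [hT]; omega)
      rw [this]
      simp only [mul_zero, zero_mul, sub_self]
      exact I.zero_mem
  -- commutators of `ι 0` with `σ_k` lie in `I`
  have hI0 : ∀ k : ℕ, 1 ≤ k → k ≤ m+1 →
      FreeAlgebra.ι K 0 * elemPoly K (m+1) k - elemPoly K (m+1) k * FreeAlgebra.ι K 0 ∈ I := by
    rintro (_ | k) h1 h2
    · omega
    · rw [hσ k]
      have heq : FreeAlgebra.ι K 0 * (FreeAlgebra.ι K 0 * esym K k T + esym K (k+1) T)
            - (FreeAlgebra.ι K 0 * esym K k T + esym K (k+1) T) * FreeAlgebra.ι K 0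
          = FreeAlgebra.ι K 0 *
              (FreeAlgebra.ι K 0 * esym K k T - esym K k T * FreeAlgebra.ι K 0)
            + (FreeAlgebra.ι K 0 * esym K (k+1) T - esym K (k+1) T * FreeAlgebra.ι K 0) := by
        noncomm_ring
      rw [heq]
      exact I.add_mem (I.mul_mem_left _ _ (hIe k)) (hIe (k+1))
  -- commutators of any `ι i` with `σ_k` lie in `I`
  have hIall : ∀ (i : Fin (m+1)) (k : ℕ), 1 ≤ k → k ≤ m+1 →
      FreeAlgebra.ι K i * elemPoly K (m+1) k - elemPoly K (m+1) k * FreeAlgebra.ι K i ∈ I := by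
    have hstep : ∀ i : Fin (m+1),
        (∀ k : ℕ, 1 ≤ k → k ≤ m+1 → FreeAlgebra.ι K i * elemPoly K (m+1) k
          - elemPoly K (m+1) k * FreeAlgebra.ι K i ∈ I) →
        (∀ k : ℕ, 1 ≤ k → k ≤ m+1 → FreeAlgebra.ι K (finRotate (m+1) i) * elemPoly K (m+1) k
          - elemPoly K (m+1) k * FreeAlgebra.ι K (finRotate (m+1) i) ∈ I) := by
      intro i hi k h1 h2
      have hrc := hIrot _ (hi k h1 h2)
      rw [map_sub, map_mul, map_mul, hrotι] at hrc
      set i' := finRotate (m+1) i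
      have heq : FreeAlgebra.ι K i' * elemPoly K (m+1) k
            - elemPoly K (m+1) k * FreeAlgebra.ι K i'
          = (FreeAlgebra.ι K i' * rotHom K (m+1) (elemPoly K (m+1) k)
              - rotHom K (m+1) (elemPoly K (m+1) k) * FreeAlgebra.ι K i')
            + (FreeAlgebra.ι K i' *
                (elemPoly K (m+1) k - rotHom K (m+1) (elemPoly K (m+1) k))
              - (elemPoly K (m+1) k - rotHom K (m+1) (elemPoly K (m+1) k))
                * FreeAlgebra.ι K i') := by
        noncomm_ring
      rw [heq]
      exact I.add_mem hrc
        (I.sub_mem (I.mul_mem_left _ _ (hgen1' k h1 h2))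
          (I.mul_mem_right _ _ (hgen1' k h1 h2)))
    intro i
    induction i using Fin.induction with
    | zero => exact hI0
    | succ j ih =>
      have : (j.succ : Fin (m+1)) = finRotate (m+1) j.castSucc := by
        rw [finRotate_succ_apply, Fin.coeSucc_eq_succ]
      rw [this]
      exact hstep j.castSucc ih
  -- conclusion
  refine le_antisymm ?_ ?_
  · intro x hx
    refine TwoSidedIdeal.mem_span_iff.mp hx J ?_
    rintro p ⟨k, mm, h1, h2, rfl⟩
    rw [SetLike.mem_coe]
    clear hx x
    induction mm with
    | zero => simp only [Function.iterate_zero, id, sub_self]; exact J.zero_mem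
    | succ mm ih =>
      have hiterSub : ∀ (j : ℕ) (a b : FreeAlgebra K (Fin (m+1))),
          (⇑(rotHom K (m+1)))^[j] (a - b)
            = (⇑(rotHom K (m+1)))^[j] a - (⇑(rotHom K (m+1)))^[j] b := by
        intro j
        induction j with
        | zero => intro a b; simp
        | succ j ihj =>
          intro a b
          rw [Function.iterate_succ_apply', Function.iterate_succ_apply',
            Function.iterate_succ_apply', ihj, map_sub]
      have heq : elemPoly K (m+1) k - (⇑(rotHom K (m+1)))^[mm+1] (elemPoly K (m+1) k)
          = (elemPoly K (m+1) k - (⇑(rotHom K (m+1)))^[mm] (elemPoly K (m+1) k))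
            + (⇑(rotHom K (m+1)))^[mm]
              (elemPoly K (m+1) k - rotHom K (m+1) (elemPoly K (m+1) k)) := by
        rw [hiterSub, Function.iterate_succ_apply]
        abel
      rw [heq]
      exact J.add_mem ih (hJrotIter mm _ (hJd k h1 h2))
  · intro x hx
    refine TwoSidedIdeal.mem_span_iff.mp hx I ?_
    rintro p ⟨i, k, h1, h2, rfl⟩
    rw [SetLike.mem_coe]
    exact hIall i k h1 h2
end

section
/- The images in R′ of the off-diagonal commutators [x_i, x_{j+1}], for 1 ≤ i < j < n (a family of (n−1)(n−2)/2 elements), are K-linearly independent in R′. -/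
open Finset

/-- The relation on the free algebra identifying `x_i * σ_k` with `σ_k * x_i`
for `1 ≤ i, k ≤ n`; the quotient `R′ = P/I` by the two-sided ideal `I` generated
by the commutators `[x_i, σ_k]` is `RingQuot` of this relation. -/
noncomputable def commRel (K : Type*) [Field K] (n : ℕ) :
    FreeAlgebra K (Fin n) → FreeAlgebra K (Fin n) → Prop :=
  fun a b => ∃ (i : Fin n) (k : ℕ), 1 ≤ k ∧ k ≤ n ∧
    a = FreeAlgebra.ι K i * elemPoly K n k ∧ b = elemPoly K n k * FreeAlgebra.ι K i

/-- The quotient ring `R′ = P/I`. -/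
noncomputable abbrev Rquot (K : Type*) [Field K] (n : ℕ) := RingQuot (commRel K n)

/-- The quotient map `P → R′`. -/
noncomputable def mkR (K : Type*) [Field K] (n : ℕ) :
    FreeAlgebra K (Fin n) →ₐ[K] Rquot K n :=
  RingQuot.mkAlgHom K (commRel K n)

/-- The image in `R′` of the generator `x_i`. -/
noncomputable def XR (K : Type*) [Field K] (n : ℕ) (i : Fin n) : Rquot K n :=
  mkR K n (FreeAlgebra.ι K i)

/-!
Degree-two information in `R′` is detected by a square-zero representation. Given
`g : ι → ι → W`, let `x_i` act on `K × (ι →₀ K) × W` by `(c, v, w) ↦ (0, c • e_i, ∑ⱼ vⱼ • g i j)`.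
Words of length at least three act by zero and `x_a x_b` sends `(1, 0, 0)` to `(0, 0, g a b)`, so
the relations `[x_i, σ_k]` with `k ≥ 2` hold automatically, and `[x_i, σ_1]` acts by zero exactly
when each row sum of `g` equals the corresponding column sum. For such a balanced `g`, evaluation
at `(1, 0, 0)` gives a linear map on `R′` sending `x_a x_b` to `g a b`.

For an off-diagonal pair `a + 1 < b` take for `g` the cycle `a → b → b - 1 → ⋯ → a` in the path
graph: weight `1` on the chord `(a, b)` and `-1` on the edges `(j - 1, j)`, `a < j ≤ b`. Being a
cycle it is balanced, and since the chord is its only off-diagonal edge, `g a' b' - g b' a'` over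
the off-diagonal pairs `(a', b')` is the indicator of `(a, b)`.
-/

noncomputable section

section QuadraticRepresentation

variable (K : Type*) {ι W : Type*} [CommSemiring K] [AddCommMonoid W] [Module K W]

abbrev QuadSpace (ι W : Type*) [AddCommMonoid W] := K × (ι →₀ K) × W

def quadOp : W →ₗ[K] Module.End K (QuadSpace K ι W) :=
  LinearMap.smulRightₗ (LinearMap.fst K K _) ∘ₗ LinearMap.inr K K _ ∘ₗ LinearMap.inr K _ W

@[simp]
lemma quadOp_apply (w : W) (u : QuadSpace K ι W) : quadOp K w u = (0, 0, u.1 • w) := by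
  simp [quadOp]

variable (g : ι → ι → W)

def genOp (i : ι) : Module.End K (QuadSpace K ι W) :=
  LinearMap.prod 0 (LinearMap.prod ((LinearMap.fst K K _).smulRight (Finsupp.single i 1))
    (Finsupp.linearCombination K (g i) ∘ₗ LinearMap.fst K _ W ∘ₗ LinearMap.snd K K _))

@[simp]
lemma genOp_apply (i : ι) (u : QuadSpace K ι W) :
    genOp K g i u = (0, u.1 • Finsupp.single i 1, Finsupp.linearCombination K (g i) u.2.1) :=
  rfl

lemma genOp_mul_genOp (a b : ι) : genOp K g a * genOp K g b = quadOp K (g a b) := by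
  ext u <;> simp

lemma genOp_mul_quadOp (a : ι) (w : W) : genOp K g a * quadOp K w = 0 := by
  ext u <;> simp

def quadRep : FreeAlgebra K ι →ₐ[K] Module.End K (QuadSpace K ι W) :=
  FreeAlgebra.lift K (genOp K g)

@[simp]
lemma quadRep_ι (i : ι) : quadRep K g (FreeAlgebra.ι K i) = genOp K g i :=
  FreeAlgebra.lift_ι_apply _ _

lemma quadRep_ι_mul_ι (a b : ι) :
    quadRep K g (FreeAlgebra.ι K a * FreeAlgebra.ι K b) = quadOp K (g a b) := by
  rw [map_mul, quadRep_ι, quadRep_ι, genOp_mul_genOp]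

lemma quadRep_list_prod_eq_zero :
    ∀ l : List ι, 3 ≤ l.length → quadRep K g (l.map (FreeAlgebra.ι K)).prod = 0
  | a :: b :: c :: t, _ => by
    simp only [List.map_cons, List.prod_cons, map_mul, quadRep_ι]
    rw [← mul_assoc (genOp K g b), genOp_mul_genOp, ← mul_assoc, genOp_mul_quadOp, zero_mul]

end QuadraticRepresentation

section ElementaryPolynomials

variable {K : Type*} [Field K] {n : ℕ}

lemma elemPoly_one : elemPoly K n 1 = ∑ i, FreeAlgebra.ι K i := by
  simp [elemPoly, Finset.powersetCard_one, Finset.sort_singleton]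

variable {W : Type*} [AddCommMonoid W] [Module K W] (g : Fin n → Fin n → W)

lemma quadRep_ι_mul_elemPoly {k : ℕ} (hk : 2 ≤ k) (i : Fin n) :
    quadRep K g (FreeAlgebra.ι K i * elemPoly K n k) = 0 := by
  rw [elemPoly, Finset.mul_sum, map_sum]
  refine Finset.sum_eq_zero fun s hs => ?_
  rw [← List.prod_cons, ← List.map_cons]
  apply quadRep_list_prod_eq_zero
  rw [List.length_cons, Finset.length_sort, (Finset.mem_powersetCard.1 hs).2]
  omega

lemma quadRep_elemPoly_mul_ι {k : ℕ} (hk : 2 ≤ k) (i : Fin n) :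
    quadRep K g (elemPoly K n k * FreeAlgebra.ι K i) = 0 := by
  rw [elemPoly, Finset.sum_mul, map_sum]
  refine Finset.sum_eq_zero fun s hs => ?_
  rw [← List.prod_singleton (x := FreeAlgebra.ι K i), ← List.prod_append, ← List.map_singleton,
    ← List.map_append]
  apply quadRep_list_prod_eq_zero
  rw [List.length_append, List.length_singleton, Finset.length_sort,
    (Finset.mem_powersetCard.1 hs).2]
  omega

lemma quadRep_respects_commRel (hg : ∀ i, ∑ j, g i j = ∑ j, g j i) ⦃x y : FreeAlgebra K (Fin n)⦄
    (h : commRel K n x y) : quadRep K g x = quadRep K g y := by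
  obtain ⟨i, k, hk, -, rfl, rfl⟩ := h
  obtain rfl | hk := hk.eq_or_lt
  · simp only [elemPoly_one, Finset.mul_sum, Finset.sum_mul, map_sum, quadRep_ι_mul_ι]
    rw [← map_sum, ← map_sum, hg]
  · rw [quadRep_ι_mul_elemPoly g hk, quadRep_elemPoly_mul_ι g hk]

theorem exists_linearMap_XR_mul_XR (hg : ∀ i, ∑ j, g i j = ∑ j, g j i) :
    ∃ L : Rquot K n →ₗ[K] W, ∀ a b, L (XR K n a * XR K n b) = g a b := by
  let ψ := RingQuot.liftAlgHom K ⟨quadRep K g, quadRep_respects_commRel g hg⟩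
  refine ⟨(LinearMap.snd K _ W ∘ₗ LinearMap.snd K K _) ∘ₗ LinearMap.applyₗ (1, 0, 0) ∘ₗ
    ψ.toLinearMap, fun a b => ?_⟩
  simp [ψ, XR, mkR, ← map_mul, quadRep_ι_mul_ι]

end ElementaryPolynomials

section PathCycle

variable (K : Type*) [Ring K]

def pathCycle (a b i j : ℕ) : K :=
  (if i = a ∧ j = b then 1 else 0) - (if j = i + 1 ∧ a < j ∧ j ≤ b then 1 else 0)

abbrev OffDiagPair (n : ℕ) := {q : Fin n × Fin n // (q.1 : ℕ) + 1 < (q.2 : ℕ)}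

def offDiagCycles (n : ℕ) (i j : Fin n) : OffDiagPair n → K :=
  fun p => pathCycle K p.1.1 p.1.2 i j

variable {K}

lemma sum_pathCycle_comm {a b n i : ℕ} (hab : a ≤ b) (hb : b < n) (hi : i < n) :
    ∑ j ∈ range n, pathCycle K a b i j = ∑ j ∈ range n, pathCycle K a b j i := by
  have hsucc : ∑ j ∈ range n, (if j = i + 1 ∧ a < j ∧ j ≤ b then (1 : K) else 0) =
      if a ≤ i ∧ i < b then 1 else 0 := by
    rw [Finset.sum_eq_single (i + 1)]
    · split_ifs <;> first | rfl | omega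
    · intro j _ hj; rw [if_neg (by omega)]
    · intro h; rw [if_neg (by simp at h; omega)]
  have hpred : ∑ j ∈ range n, (if i = j + 1 ∧ a < i ∧ i ≤ b then (1 : K) else 0) =
      if a < i ∧ i ≤ b then 1 else 0 := by
    rw [Finset.sum_eq_single (i - 1)]
    · split_ifs <;> first | rfl | omega
    · intro j _ hj; rw [if_neg (by omega)]
    · intro h; rw [if_neg (by simp at h; omega)]
  simp only [pathCycle, Finset.sum_sub_distrib, hsucc, hpred]
  simp only [ite_and, sum_ite_irrel, sum_ite_eq', mem_range, hb, ↓reduceIte, sum_const_zero]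
  split_ifs <;> first | (exfalso; omega) | simp

lemma pathCycle_of_succ_lt {a b i j : ℕ} (h : i + 1 < j) :
    pathCycle K a b i j = if i = a ∧ j = b then 1 else 0 := by
  rw [pathCycle, if_neg (show ¬(j = i + 1 ∧ a < j ∧ j ≤ b) by omega), sub_zero]

lemma pathCycle_of_lt {a b i j : ℕ} (hab : a ≤ b) (h : j < i) : pathCycle K a b i j = 0 := by
  rw [pathCycle, if_neg (show ¬(i = a ∧ j = b) by omega),
    if_neg (show ¬(j = i + 1 ∧ a < j ∧ j ≤ b) by omega), sub_zero]

lemma sum_offDiagCycles_comm {n : ℕ} (i : Fin n) :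
    ∑ j, offDiagCycles K n i j = ∑ j, offDiagCycles K n j i := funext fun p => by
  simp only [Finset.sum_apply, offDiagCycles]
  rw [Fin.sum_univ_eq_sum_range (pathCycle K _ _ i) n,
    Fin.sum_univ_eq_sum_range (fun j => pathCycle K _ _ j i) n]
  exact sum_pathCycle_comm (Nat.le_of_succ_le p.2.le) p.1.2.isLt i.isLt

lemma offDiagCycles_sub_offDiagCycles {n : ℕ} (q : OffDiagPair n) :
    offDiagCycles K n q.1.1 q.1.2 - offDiagCycles K n q.1.2 q.1.1 = Pi.single q 1 := by
  ext p
  have hp : (p.1.1 : ℕ) ≤ p.1.2 := Nat.le_of_succ_le p.2.le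
  simp only [offDiagCycles, Pi.sub_apply, pathCycle_of_succ_lt q.2,
    pathCycle_of_lt hp (Nat.lt_of_succ_lt q.2), sub_zero, Pi.single_apply, Subtype.ext_iff,
    Prod.ext_iff, Fin.val_inj, eq_comm]

end PathCycle

end

theorem offDiagonal_commutators_linearIndependent_general
    (K : Type*) [Field K] (n : ℕ) :
    LinearIndependent K (fun q : {q : Fin n × Fin n // (q.1 : ℕ) + 1 < (q.2 : ℕ)} =>
      XR K n q.1.1 * XR K n q.1.2 - XR K n q.1.2 * XR K n q.1.1) := by
  obtain ⟨L, hL⟩ := exists_linearMap_XR_mul_XR (K := K) (offDiagCycles K n) sum_offDiagCycles_comm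
  refine LinearIndependent.of_comp L ?_
  simpa [Function.comp_def, hL, offDiagCycles_sub_offDiagCycles] using
    Pi.linearIndependent_single_one (OffDiagPair n) K

/-- The images in `R′` of the off-diagonal commutators `[x_i, x_{j+1}]`,
`1 ≤ i < j < n` (in one-based labelling; equivalently the commutators
`[x_a, x_b]` with `a + 1 < b` in zero-based labelling) are `K`-linearly
independent in `R′`. -/
theorem offDiagonal_commutators_linearIndependent
    (K : Type*) [Field K] [CharZero K] (n : ℕ) (hn : 3 ≤ n) :
    LinearIndependent K (fun q : {q : Fin n × Fin n // (q.1 : ℕ) + 1 < (q.2 : ℕ)} =>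
      XR K n q.1.1 * XR K n q.1.2 - XR K n q.1.2 * XR K n q.1.1) :=
  offDiagonal_commutators_linearIndependent_general K n
end

section
/- In R′, x_ix_j ≠ x_jx_i whenever i ≠ j. Consequently the ideal I is properly contained in the ideal J of P generated by all commutators [x_i, x_j], 1 ≤ i, j ≤ n. -/
open Finset

section Aux

variable {K : Type*} [Field K] {n : ℕ}


/-- rank-one "tensor" of two vectors. -/
def tens (v w : Fin n → K) : Fin n → Fin n → K := fun p q => v p * w q

lemma tens_add_right (v w w' : Fin n → K) : tens v (w + w') = tens v w + tens v w' := by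
  funext p q; simp [tens, mul_add]

lemma tens_smul_right (v : Fin n → K) (c : K) (w : Fin n → K) :
    tens v (c • w) = c • tens v w := by
  funext p q; simp [tens]; ring

lemma tens_zero_right (v : Fin n → K) : tens v (0 : Fin n → K) = 0 := by
  funext p q; simp [tens]

/-- generators of the relation submodule. -/
def cgen (K : Type*) [Field K] (n : ℕ) (a : Fin n) : Fin n → Fin n → K :=
  fun p q => (if p = a then (1:K) else 0) - (if q = a then 1 else 0)

noncomputable def Wsub (K : Type*) [Field K] (n : ℕ) : Submodule K (Fin n → Fin n → K) :=
  Submodule.span K (Set.range (cgen K n))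

abbrev Mmod (K : Type*) [Field K] (n : ℕ) :=
  K × (Fin n → K) × ((Fin n → Fin n → K) ⧸ Wsub K n)

def eb (K : Type*) [Field K] (n : ℕ) (i : Fin n) : Fin n → K := Pi.single i 1

noncomputable def amap (K : Type*) [Field K] (n : ℕ) (i : Fin n) :
    Mmod K n →ₗ[K] Mmod K n where
  toFun m := (0, m.1 • eb K n i, (Wsub K n).mkQ (tens (eb K n i) m.2.1))
  map_add' x y := by
    refine Prod.ext (by simp) (Prod.ext (by simp [add_smul]) ?_)
    simp [tens_add_right]
  map_smul' c x := by
    refine Prod.ext (by simp) (Prod.ext (by simp [smul_smul]) ?_)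
    simp [tens_smul_right]

lemma amap_apply (i : Fin n) (m : Mmod K n) :
    amap K n i m = (0, m.1 • eb K n i, (Wsub K n).mkQ (tens (eb K n i) m.2.1)) := rfl

lemma triple (p q r : Fin n) (x : Mmod K n) :
    amap K n p (amap K n q (amap K n r x)) = 0 := by
  simp [amap_apply, tens_smul_right, tens_zero_right]

lemma prod_amap_zero (l : List (Fin n)) (hl : 3 ≤ l.length) :
    (l.map (amap K n)).prod = 0 := by
  match l with
  | a :: b :: c :: t =>
    refine LinearMap.ext fun m => ?_
    simp only [List.map_cons, List.prod_cons, Module.End.mul_apply, LinearMap.zero_apply]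
    exact triple a b c _


lemma sum_eb : (∑ j, eb K n j) = (fun _ => (1:K)) := by
  funext p
  simp [eb, Finset.sum_apply, Pi.single_apply, Finset.sum_ite_eq]

lemma tens_sum_left (v : Fin n → K) :
    (∑ j, tens (eb K n j) v) = tens (fun _ => (1:K)) v := by
  funext p q
  have h : (∑ j, eb K n j p) = 1 := by simp [eb, Pi.single_apply]
  simp only [Finset.sum_apply, tens]
  rw [← Finset.sum_mul, h, one_mul]

lemma sum_amap_apply (x : Mmod K n) :
    (∑ j, amap K n j) x =
      (0, x.1 • (fun _ => (1:K)), (Wsub K n).mkQ (tens (fun _ => 1) x.2.1)) := by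
  rw [LinearMap.sum_apply]
  refine Prod.ext ?_ (Prod.ext ?_ ?_)
  · rw [Prod.fst_sum]; simp [amap_apply]
  · show (∑ j, amap K n j x).2.1 = _
    rw [Prod.snd_sum, Prod.fst_sum]
    simp only [amap_apply, ← Finset.smul_sum, sum_eb]
  · show (∑ j, amap K n j x).2.2 = _
    rw [Prod.snd_sum, Prod.snd_sum]
    simp only [amap_apply]
    rw [← map_sum, tens_sum_left]

lemma cgen_mem (a : Fin n) : cgen K n a ∈ Wsub K n :=
  Submodule.subset_span ⟨a, rfl⟩

lemma comm_sum (i : Fin n) :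
    amap K n i * (∑ j, amap K n j) = (∑ j, amap K n j) * amap K n i := by
  refine LinearMap.ext fun m => ?_
  rw [Module.End.mul_apply, Module.End.mul_apply, sum_amap_apply, amap_apply,
    amap_apply, sum_amap_apply]
  refine Prod.ext rfl (Prod.ext (by simp) ?_)
  show (Wsub K n).mkQ (tens (eb K n i) (m.1 • fun _ => (1:K))) =
    (Wsub K n).mkQ (tens (fun _ => (1:K)) (m.1 • eb K n i))
  rw [tens_smul_right, tens_smul_right, map_smul, map_smul]
  congr 1
  rw [Submodule.mkQ_apply, Submodule.mkQ_apply, Submodule.Quotient.eq]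
  have : tens (eb K n i) (fun _ => (1:K)) - tens (fun _ => (1:K)) (eb K n i)
      = cgen K n i := by
    funext p q
    simp [tens, eb, cgen, Pi.single_apply]
  rw [this]
  exact cgen_mem i

noncomputable def phi (K : Type*) [Field K] (n : ℕ) :
    FreeAlgebra K (Fin n) →ₐ[K] Module.End K (Mmod K n) :=
  FreeAlgebra.lift K (amap K n)

lemma phi_ι (i : Fin n) : phi K n (FreeAlgebra.ι K i) = amap K n i := by
  simp [phi]

lemma phi_prod (l : List (Fin n)) :
    phi K n ((l.map (FreeAlgebra.ι K)).prod) = (l.map (amap K n)).prod := by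
  rw [map_list_prod, List.map_map]
  have h : (⇑(phi K n) ∘ FreeAlgebra.ι K) = amap K n := funext fun i => phi_ι i
  rw [h]

lemma phi_elem (k : ℕ) : phi K n (elemPoly K n k) =
    ∑ s ∈ Finset.univ.powersetCard k, ((s.sort (· ≤ ·)).map (amap K n)).prod := by
  rw [elemPoly, map_sum]
  exact Finset.sum_congr rfl fun s _ => phi_prod _

lemma phi_elem_one : phi K n (elemPoly K n 1) = ∑ j, amap K n j := by
  rw [phi_elem, Finset.powersetCard_one, Finset.sum_map]
  refine Finset.sum_congr rfl fun j _ => ?_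
  simp

lemma phi_comm (i : Fin n) (k : ℕ) (hk : 1 ≤ k) :
    amap K n i * phi K n (elemPoly K n k) = phi K n (elemPoly K n k) * amap K n i := by
  rcases eq_or_lt_of_le hk with h1 | h2
  · rw [← h1, phi_elem_one]
    exact comm_sum i
  · rw [phi_elem, Finset.mul_sum, Finset.sum_mul]
    refine Finset.sum_congr rfl fun s hs => ?_
    have hcard : s.card = k := (Finset.mem_powersetCard.mp hs).2
    have hlen : (s.sort (· ≤ ·)).length = k := by rw [Finset.length_sort, hcard]
    have e1 : amap K n i * ((s.sort (· ≤ ·)).map (amap K n)).prod = 0 := by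
      have h := prod_amap_zero (K := K) (i :: s.sort (· ≤ ·)) (by simp [hlen]; omega)
      rwa [List.map_cons, List.prod_cons] at h
    have e2 : ((s.sort (· ≤ ·)).map (amap K n)).prod * amap K n i = 0 := by
      have h := prod_amap_zero (K := K) (s.sort (· ≤ ·) ++ [i]) (by simp [hlen]; omega)
      rwa [List.map_append, List.prod_append, List.map_singleton, List.prod_singleton] at h
    rw [e1, e2]

lemma phi_rel : ∀ ⦃a b : FreeAlgebra K (Fin n)⦄, commRel K n a b → phi K n a = phi K n b := by
  rintro a b ⟨i, k, hk1, hkn, rfl, rfl⟩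
  rw [map_mul, map_mul, phi_ι]
  exact phi_comm i k hk1

noncomputable def psi (K : Type*) [Field K] (n : ℕ) :
    Rquot K n →ₐ[K] Module.End K (Mmod K n) :=
  RingQuot.liftAlgHom K ⟨phi K n, phi_rel⟩

lemma psi_XR (i : Fin n) : psi K n (XR K n i) = amap K n i := by
  rw [XR, mkR, psi, RingQuot.liftAlgHom_mkAlgHom_apply, phi_ι]

/-- Detecting functional. -/
def Fdet (K : Type*) [Field K] (n : ℕ) (i j k' : Fin n) :
    (Fin n → Fin n → K) →ₗ[K] K where
  toFun m := m i j + m j k' + m k' i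
  map_add' x y := by simp [Pi.add_apply]; ring
  map_smul' c x := by simp [Pi.smul_apply, smul_eq_mul]; ring

lemma Fdet_wsub (i j k' : Fin n) : Wsub K n ≤ LinearMap.ker (Fdet K n i j k') := by
  rw [Wsub, Submodule.span_le]
  rintro _ ⟨a, rfl⟩
  simp only [SetLike.mem_coe, LinearMap.mem_ker]
  show cgen K n a i j + cgen K n a j k' + cgen K n a k' i = 0
  simp only [cgen]
  ring

lemma XR_not_comm (i j : Fin n) (hn : 3 ≤ n) (hij : i ≠ j) :
    XR K n i * XR K n j ≠ XR K n j * XR K n i := by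
  intro h
  -- push to endomorphisms
  have h2 : amap K n i * amap K n j = amap K n j * amap K n i := by
    have := congrArg (psi K n) h
    simpa only [map_mul, psi_XR] using this
  have h3 := LinearMap.congr_fun h2 ((1 : K), 0, 0)
  rw [Module.End.mul_apply, Module.End.mul_apply] at h3
  simp only [amap_apply, tens_zero_right, map_zero, one_smul, smul_zero, zero_smul] at h3
  have h4 := congrArg (fun x : Mmod K n => x.2.2) h3
  simp only at h4
  -- h4 : mkQ (tens (eb i) (eb j)) = mkQ (tens (eb j) (eb i))  (roughly)
  have hmem : tens (eb K n i) (eb K n j) - tens (eb K n j) (eb K n i) ∈ Wsub K n := by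
    rw [← Submodule.Quotient.eq]
    simpa [Submodule.mkQ_apply] using h4
  -- choose a third index
  have hk' : ∃ k' : Fin n, k' ≠ i ∧ k' ≠ j := by
    have hcard : ({i, j} : Finset (Fin n)).card ≤ 2 := by
      apply le_trans (Finset.card_insert_le i {j}); simp
    have : (({i, j} : Finset (Fin n))ᶜ).Nonempty := by
      rw [← Finset.card_pos, Finset.card_compl, Fintype.card_fin]
      omega
    obtain ⟨k', hk'⟩ := this
    simp only [Finset.mem_compl, Finset.mem_insert, Finset.mem_singleton, not_or] at hk'
    exact ⟨k', hk'.1, hk'.2⟩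
  obtain ⟨k', hk'i, hk'j⟩ := hk'
  have hzero := Fdet_wsub (K := K) i j k' hmem
  rw [LinearMap.mem_ker] at hzero
  have hone : Fdet K n i j k' (tens (eb K n i) (eb K n j) - tens (eb K n j) (eb K n i))
      = 1 := by
    show (tens (eb K n i) (eb K n j) - tens (eb K n j) (eb K n i)) i j
      + (tens (eb K n i) (eb K n j) - tens (eb K n j) (eb K n i)) j k'
      + (tens (eb K n i) (eb K n j) - tens (eb K n j) (eb K n i)) k' i = 1
    simp [tens, eb, Pi.single_apply, hij, hij.symm, hk'i, hk'j, Ne.symm hk'i, Ne.symm hk'j]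
  rw [hzero] at hone
  exact zero_ne_one hone

section CommIdeal

variable (K) (n)

lemma gen_comm_mem (i : Fin n) (b : FreeAlgebra K (Fin n)) :
    FreeAlgebra.ι K i * b - b * FreeAlgebra.ι K i ∈
      TwoSidedIdeal.span {p : FreeAlgebra K (Fin n) | ∃ i j : Fin n,
        p = FreeAlgebra.ι K i * FreeAlgebra.ι K j - FreeAlgebra.ι K j * FreeAlgebra.ι K i} := by
  set J := TwoSidedIdeal.span {p : FreeAlgebra K (Fin n) | ∃ i j : Fin n,
        p = FreeAlgebra.ι K i * FreeAlgebra.ι K j - FreeAlgebra.ι K j * FreeAlgebra.ι K i}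
  induction b using FreeAlgebra.induction with
  | grade0 r =>
      have : FreeAlgebra.ι K i * algebraMap K (FreeAlgebra K (Fin n)) r
          - algebraMap K (FreeAlgebra K (Fin n)) r * FreeAlgebra.ι K i = 0 := by
        rw [Algebra.commutes]; exact sub_self _
      rw [this]; exact zero_mem J
  | grade1 j => exact TwoSidedIdeal.subset_span ⟨i, j, rfl⟩
  | mul b c hb hc =>
      have : FreeAlgebra.ι K i * (b * c) - (b * c) * FreeAlgebra.ι K i =
          (FreeAlgebra.ι K i * b - b * FreeAlgebra.ι K i) * c
          + b * (FreeAlgebra.ι K i * c - c * FreeAlgebra.ι K i) := by noncomm_ring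
      rw [this]
      exact J.add_mem (J.mul_mem_right _ _ hb) (J.mul_mem_left _ _ hc)
  | add b c hb hc =>
      have : FreeAlgebra.ι K i * (b + c) - (b + c) * FreeAlgebra.ι K i =
          (FreeAlgebra.ι K i * b - b * FreeAlgebra.ι K i)
          + (FreeAlgebra.ι K i * c - c * FreeAlgebra.ι K i) := by noncomm_ring
      rw [this]
      exact J.add_mem hb hc

lemma comm_mem (a b : FreeAlgebra K (Fin n)) :
    a * b - b * a ∈
      TwoSidedIdeal.span {p : FreeAlgebra K (Fin n) | ∃ i j : Fin n,
        p = FreeAlgebra.ι K i * FreeAlgebra.ι K j - FreeAlgebra.ι K j * FreeAlgebra.ι K i} := by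
  set J := TwoSidedIdeal.span {p : FreeAlgebra K (Fin n) | ∃ i j : Fin n,
        p = FreeAlgebra.ι K i * FreeAlgebra.ι K j - FreeAlgebra.ι K j * FreeAlgebra.ι K i}
  induction a using FreeAlgebra.induction generalizing b with
  | grade0 r => rw [Algebra.commutes, sub_self]; exact zero_mem J
  | grade1 i => exact gen_comm_mem K n i b
  | mul a c ha hc =>
      have : (a * c) * b - b * (a * c) =
          a * (c * b - b * c) + (a * b - b * a) * c := by noncomm_ring
      rw [this]
      exact J.add_mem (J.mul_mem_left _ _ (hc b)) (J.mul_mem_right _ _ (ha b))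
  | add a c ha hc =>
      have : (a + c) * b - b * (a + c) =
          (a * b - b * a) + (c * b - b * c) := by noncomm_ring
      rw [this]
      exact J.add_mem (ha b) (hc b)

end CommIdeal


end Aux

/-- In `R′`, `x_i x_j ≠ x_j x_i` whenever `i ≠ j`; consequently the two-sided
ideal `I` of `P` generated by the commutators `[x_i, σ_k]` is strictly contained
in the two-sided ideal `J` generated by all commutators `[x_i, x_j]`. -/
theorem generators_not_commute_and_ideal_lt
    (K : Type*) [Field K] [CharZero K] (n : ℕ) (hn : 3 ≤ n) :
    (∀ i j : Fin n, i ≠ j → XR K n i * XR K n j ≠ XR K n j * XR K n i) ∧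
    TwoSidedIdeal.span {p : FreeAlgebra K (Fin n) | ∃ (i : Fin n) (k : ℕ), 1 ≤ k ∧ k ≤ n ∧
        p = FreeAlgebra.ι K i * elemPoly K n k - elemPoly K n k * FreeAlgebra.ι K i} <
    TwoSidedIdeal.span {p : FreeAlgebra K (Fin n) | ∃ i j : Fin n,
        p = FreeAlgebra.ι K i * FreeAlgebra.ι K j - FreeAlgebra.ι K j * FreeAlgebra.ι K i} := by

  have part1 : ∀ i j : Fin n, i ≠ j → XR K n i * XR K n j ≠ XR K n j * XR K n i :=
    fun i j hij => XR_not_comm i j hn hij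
  refine ⟨part1, ?_⟩
  have hle : TwoSidedIdeal.span {p : FreeAlgebra K (Fin n) | ∃ (i : Fin n) (k : ℕ),
        1 ≤ k ∧ k ≤ n ∧
        p = FreeAlgebra.ι K i * elemPoly K n k - elemPoly K n k * FreeAlgebra.ι K i} ≤
      TwoSidedIdeal.span {p : FreeAlgebra K (Fin n) | ∃ i j : Fin n,
        p = FreeAlgebra.ι K i * FreeAlgebra.ι K j - FreeAlgebra.ι K j * FreeAlgebra.ι K i} := by
    intro x hx
    rw [TwoSidedIdeal.mem_span_iff] at hx
    apply hx
    rintro p ⟨i, k, _, _, rfl⟩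
    exact comm_mem K n _ _
  refine lt_of_le_of_ne hle ?_
  intro heq
  set i0 : Fin n := ⟨0, by omega⟩
  set i1 : Fin n := ⟨1, by omega⟩
  have h01 : i0 ≠ i1 := by simp [i0, i1, Fin.ext_iff]
  have hgJ : FreeAlgebra.ι K i0 * FreeAlgebra.ι K i1
      - FreeAlgebra.ι K i1 * FreeAlgebra.ι K i0 ∈
      TwoSidedIdeal.span {p : FreeAlgebra K (Fin n) | ∃ i j : Fin n,
        p = FreeAlgebra.ι K i * FreeAlgebra.ι K j - FreeAlgebra.ι K j * FreeAlgebra.ι K i} :=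
    TwoSidedIdeal.subset_span ⟨i0, i1, rfl⟩
  rw [← heq] at hgJ
  -- the span of the σ-relations is contained in the kernel of mkR
  have hker : TwoSidedIdeal.span {p : FreeAlgebra K (Fin n) | ∃ (i : Fin n) (k : ℕ),
        1 ≤ k ∧ k ≤ n ∧
        p = FreeAlgebra.ι K i * elemPoly K n k - elemPoly K n k * FreeAlgebra.ι K i} ≤
      TwoSidedIdeal.ker (mkR K n) := by
    intro x hx
    rw [TwoSidedIdeal.mem_span_iff] at hx
    apply hx
    rintro p ⟨i, k, hk1, hkn, rfl⟩
    rw [SetLike.mem_coe, TwoSidedIdeal.mem_ker, map_sub, sub_eq_zero]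
    exact RingQuot.mkAlgHom_rel K ⟨i, k, hk1, hkn, rfl, rfl⟩
  have := hker hgJ
  rw [TwoSidedIdeal.mem_ker, map_sub, sub_eq_zero, map_mul, map_mul] at this
  exact part1 i0 i1 h01 this
end

section
/- For every homogeneous quadratic element q of P there exist coefficients a_i (1 ≤ i ≤ n), b_{ij} (1 ≤ i < j ≤ n), and c_{ij} (1 ≤ i < j < n) in K, uniquely determined by the image of q in R′, such that in R′ the image of q equals ∑_{i=1}^{n} a_i x_i² + ∑_{1 ≤ i < j ≤ n} b_{ij} x_ix_j + ∑_{1 ≤ i < j < n} c_{ij} [x_i, x_{j+1}]. -/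
open Finset

namespace CanonQuad

/-- Index type for the truncated representation: degree 0, 1, 2 pieces. -/
abbrev Idx (n : ℕ) := Unit ⊕ Fin n ⊕ (Fin n × Fin n)

/-- degree of an index -/
def deg {n : ℕ} : Idx n → ℕ
  | Sum.inl _ => 0
  | Sum.inr (Sum.inl _) => 1
  | Sum.inr (Sum.inr _) => 2

lemma deg_le {n : ℕ} (x : Idx n) : deg x ≤ 2 := by
  rcases x with _ | x | x <;> simp [deg]

/-- `pie K k i a b` is the `(a,b)` entry of the normalised coefficient matrix of
the monomial `x_k x_i`, i.e. `π(E_{k i})_{a b}` where `π` kills the relation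
matrices `R_p = ∑_j (E_{p j} - E_{j p})` by clearing the subdiagonal entries `(l+1, l)`. -/
def pie (K : Type*) [Field K] {n : ℕ} (k i a b : Fin n) : K :=
  (if a = k ∧ b = i then 1 else 0)
  - (if a ≠ b ∧ (k : ℕ) = (i : ℕ) + 1 ∧ (k : ℕ) ≤ (a : ℕ) then 1 else 0)
  + (if a ≠ b ∧ (k : ℕ) = (i : ℕ) + 1 ∧ (k : ℕ) ≤ (b : ℕ) then 1 else 0)

lemma pie_of_ne_succ {K : Type*} [Field K] {n : ℕ} {k i : Fin n}
    (h : (k : ℕ) ≠ (i : ℕ) + 1) (a b : Fin n) :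
    pie K k i a b = if a = k ∧ b = i then 1 else 0 := by
  unfold pie
  simp [h]

/-- the representing matrix of the generator `x_i`. -/
def Xmat (K : Type*) [Field K] {n : ℕ} (i : Fin n) : Matrix (Idx n) (Idx n) K :=
  Matrix.of fun r c => match r, c with
    | Sum.inl _, Sum.inr (Sum.inl j) => if j = i then 1 else 0
    | Sum.inr (Sum.inl k), Sum.inr (Sum.inr p) => pie K k i p.1 p.2
    | _, _ => 0

/-- `M` raises degree by exactly `d`. -/
def HasDeg {K : Type*} [Field K] {n : ℕ} (d : ℕ) (M : Matrix (Idx n) (Idx n) K) : Prop :=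
  ∀ r c, M r c ≠ 0 → deg c = deg r + d

variable {K : Type*} [Field K] {n : ℕ}

lemma hasDeg_X (i : Fin n) : HasDeg 1 (Xmat K i) := by
  intro r c h
  rcases r with _ | j | p <;> rcases c with _ | j' | p' <;>
    simp_all [Xmat, deg]

lemma HasDeg.mul {d e : ℕ} {M N : Matrix (Idx n) (Idx n) K}
    (hM : HasDeg d M) (hN : HasDeg e N) : HasDeg (d + e) (M * N) := by
  intro r c h
  rw [Matrix.mul_apply] at h
  obtain ⟨m, -, hm⟩ := Finset.exists_ne_zero_of_sum_ne_zero h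
  have h1 := hM r m (left_ne_zero_of_mul hm)
  have h2 := hN m c (right_ne_zero_of_mul hm)
  omega

lemma HasDeg.eq_zero {d : ℕ} (hd : 3 ≤ d) {M : Matrix (Idx n) (Idx n) K}
    (h : HasDeg d M) : M = 0 := by
  ext r c
  by_contra hc
  have := h r c hc
  have := deg_le (n := n) c
  omega

lemma hasDeg_one : HasDeg 0 (1 : Matrix (Idx n) (Idx n) K) := by
  intro r c h
  rw [Matrix.one_apply] at h
  by_cases h' : r = c
  · subst h'; omega
  · simp [h'] at h

lemma hasDeg_sum {α : Type*} {d : ℕ} {s : Finset α} {f : α → Matrix (Idx n) (Idx n) K}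
    (h : ∀ a ∈ s, HasDeg d (f a)) : HasDeg d (∑ a ∈ s, f a) := by
  intro r c hc
  rw [Matrix.sum_apply] at hc
  obtain ⟨a, ha, hne⟩ := Finset.exists_ne_zero_of_sum_ne_zero hc
  exact h a ha r c hne

lemma hasDeg_list_prod : ∀ l : List (Fin n), HasDeg l.length ((l.map (Xmat K)).prod)
  | [] => by simpa using hasDeg_one
  | i :: t => by
      have := (hasDeg_X (K := K) i).mul (hasDeg_list_prod t)
      simpa [List.prod_cons, Nat.add_comm] using this

/-- the representation of the free algebra. -/
noncomputable def phi (K : Type*) [Field K] (n : ℕ) :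
    FreeAlgebra K (Fin n) →ₐ[K] Matrix (Idx n) (Idx n) K :=
  FreeAlgebra.lift K (Xmat K)

lemma phi_ι (i : Fin n) : phi K n (FreeAlgebra.ι K i) = Xmat K i :=
  FreeAlgebra.lift_ι_apply _ _

lemma hasDeg_phi_elemPoly (k : ℕ) : HasDeg k (phi K n (elemPoly K n k)) := by
  rw [elemPoly, map_sum]
  refine hasDeg_sum fun s hs => ?_
  rw [map_list_prod, List.map_map]
  have hcard : (s.sort (· ≤ ·)).length = k := by
    rw [Finset.length_sort]
    exact (Finset.mem_powersetCard.1 hs).2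
  have : ((fun i => phi K n (FreeAlgebra.ι K i)) : Fin n → _) = Xmat K := by
    funext i; exact phi_ι i
  rw [show ⇑(phi K n) ∘ FreeAlgebra.ι K = Xmat K from funext fun i => phi_ι i]
  simpa [hcard] using hasDeg_list_prod (K := K) (s.sort (· ≤ ·))

lemma elemPoly_one : elemPoly K n 1 = ∑ j : Fin n, FreeAlgebra.ι K j := by
  rw [elemPoly, Finset.powersetCard_one, Finset.sum_map]
  refine Finset.sum_congr rfl fun j _ => ?_
  simp [Finset.sort_singleton]

/-- helper: sums of indicator over `Fin n` pinned to a value of the coercion. -/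
lemma sum_ite_val (P : Prop) [Decidable P] (v : ℕ) :
    ∑ j : Fin n, (if P ∧ (j : ℕ) = v then (1 : K) else 0) =
      if P ∧ v < n then 1 else 0 := by
  by_cases hv : v < n
  · rw [Fintype.sum_eq_single (⟨v, hv⟩ : Fin n)]
    · by_cases hP : P <;> simp [hP, hv]
    · intro x hx
      rw [if_neg]
      rintro ⟨-, hxv⟩
      exact hx (Fin.ext hxv)
  · rw [if_neg (by tauto), Finset.sum_eq_zero]
    intro j _
    rw [if_neg]
    rintro ⟨-, hj⟩
    exact hv (hj ▸ j.isLt)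

lemma pie_sum (i a b : Fin n) :
    ∑ j : Fin n, pie K i j a b = ∑ j : Fin n, pie K j i a b := by
  unfold pie
  rw [Finset.sum_add_distrib, Finset.sum_sub_distrib,
      Finset.sum_add_distrib, Finset.sum_sub_distrib]
  have e1 : ∑ j : Fin n, (if a = i ∧ b = j then (1:K) else 0) =
      if (a = i) ∧ (b:ℕ) < n then 1 else 0 := by
    rw [← sum_ite_val (a = i) (b : ℕ)]
    exact Finset.sum_congr rfl fun j _ => if_congr
      (and_congr_right' ⟨fun h => by omega, fun h => Fin.ext (by omega)⟩) rfl rfl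
  have e2 : ∑ j : Fin n, (if a ≠ b ∧ (i:ℕ) = (j:ℕ) + 1 ∧ (i:ℕ) ≤ (a:ℕ) then (1:K) else 0) =
      if (a ≠ b ∧ 1 ≤ (i:ℕ) ∧ (i:ℕ) ≤ (a:ℕ)) ∧ (i:ℕ) - 1 < n then 1 else 0 := by
    rw [← sum_ite_val (K := K) (a ≠ b ∧ 1 ≤ (i:ℕ) ∧ (i:ℕ) ≤ (a:ℕ)) ((i:ℕ) - 1)]
    refine Finset.sum_congr rfl fun j _ => if_congr ?_ rfl rfl
    constructor
    · rintro ⟨h1, h2, h3⟩; exact ⟨⟨h1, by omega, h3⟩, by omega⟩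
    · rintro ⟨⟨h1, h2, h3⟩, h4⟩; exact ⟨h1, by omega, h3⟩
  have e3 : ∑ j : Fin n, (if a ≠ b ∧ (i:ℕ) = (j:ℕ) + 1 ∧ (i:ℕ) ≤ (b:ℕ) then (1:K) else 0) =
      if (a ≠ b ∧ 1 ≤ (i:ℕ) ∧ (i:ℕ) ≤ (b:ℕ)) ∧ (i:ℕ) - 1 < n then 1 else 0 := by
    rw [← sum_ite_val (K := K) (a ≠ b ∧ 1 ≤ (i:ℕ) ∧ (i:ℕ) ≤ (b:ℕ)) ((i:ℕ) - 1)]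
    refine Finset.sum_congr rfl fun j _ => if_congr ?_ rfl rfl
    constructor
    · rintro ⟨h1, h2, h3⟩; exact ⟨⟨h1, by omega, h3⟩, by omega⟩
    · rintro ⟨⟨h1, h2, h3⟩, h4⟩; exact ⟨h1, by omega, h3⟩
  have f1 : ∑ j : Fin n, (if a = j ∧ b = i then (1:K) else 0) =
      if (b = i) ∧ (a:ℕ) < n then 1 else 0 := by
    rw [← sum_ite_val (b = i) (a : ℕ)]
    exact Finset.sum_congr rfl fun j _ => if_congr
      ⟨fun ⟨h1, h2⟩ => ⟨h2, by omega⟩, fun ⟨h1, h2⟩ => ⟨Fin.ext (by omega), h1⟩⟩ rfl rfl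
  have f2 : ∑ j : Fin n, (if a ≠ b ∧ (j:ℕ) = (i:ℕ) + 1 ∧ (j:ℕ) ≤ (a:ℕ) then (1:K) else 0) =
      if (a ≠ b ∧ (i:ℕ) + 1 ≤ (a:ℕ)) ∧ (i:ℕ) + 1 < n then 1 else 0 := by
    rw [← sum_ite_val (K := K) (a ≠ b ∧ (i:ℕ) + 1 ≤ (a:ℕ)) ((i:ℕ) + 1)]
    refine Finset.sum_congr rfl fun j _ => if_congr ?_ rfl rfl
    constructor
    · rintro ⟨h1, h2, h3⟩; exact ⟨⟨h1, by omega⟩, by omega⟩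
    · rintro ⟨⟨h1, h2⟩, h3⟩; exact ⟨h1, by omega, by omega⟩
  have f3 : ∑ j : Fin n, (if a ≠ b ∧ (j:ℕ) = (i:ℕ) + 1 ∧ (j:ℕ) ≤ (b:ℕ) then (1:K) else 0) =
      if (a ≠ b ∧ (i:ℕ) + 1 ≤ (b:ℕ)) ∧ (i:ℕ) + 1 < n then 1 else 0 := by
    rw [← sum_ite_val (K := K) (a ≠ b ∧ (i:ℕ) + 1 ≤ (b:ℕ)) ((i:ℕ) + 1)]
    refine Finset.sum_congr rfl fun j _ => if_congr ?_ rfl rfl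
    constructor
    · rintro ⟨h1, h2, h3⟩; exact ⟨⟨h1, by omega⟩, by omega⟩
    · rintro ⟨⟨h1, h2⟩, h3⟩; exact ⟨h1, by omega, by omega⟩
  rw [e1, e2, e3, f1, f2, f3]
  have hai := a.isLt
  have hbi := b.isLt
  have hii := i.isLt
  by_cases h : a = b
  · subst h
    simp
  · have h' : (a:ℕ) ≠ (b:ℕ) := fun hc => h (Fin.ext hc)
    have hai' : a = i ↔ (a:ℕ) = (i:ℕ) := ⟨fun hh => by rw [hh], Fin.ext⟩
    have hbi' : b = i ↔ (b:ℕ) = (i:ℕ) := ⟨fun hh => by rw [hh], Fin.ext⟩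
    simp only [h, hai', hbi', ne_eq, not_false_eq_true, true_and]
    split_ifs <;> (try (exfalso; omega)) <;> ring

lemma X_mul_X_apply (i j a b : Fin n) :
    (Xmat K i * Xmat K j) (Sum.inl ()) (Sum.inr (Sum.inr (a, b))) = pie K i j a b := by
  rw [Matrix.mul_apply]
  rw [Fintype.sum_eq_single (Sum.inr (Sum.inl i) : Idx n)]
  · simp [Xmat]
  · intro m hm
    rcases m with u | j' | p
    · simp [Xmat]
    · have : ¬ (j' = i) := fun h => hm (by rw [h])
      simp [Xmat, this]
    · simp [Xmat]

lemma hasDeg_XX (i j : Fin n) : HasDeg 2 (Xmat K i * Xmat K j) :=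
  (hasDeg_X i).mul (hasDeg_X j)

lemma eq_of_hasDeg_two {M N : Matrix (Idx n) (Idx n) K}
    (hM : HasDeg 2 M) (hN : HasDeg 2 N)
    (h : ∀ a b : Fin n,
      M (Sum.inl ()) (Sum.inr (Sum.inr (a, b))) = N (Sum.inl ()) (Sum.inr (Sum.inr (a, b)))) :
    M = N := by
  have hz : ∀ M : Matrix (Idx n) (Idx n) K, HasDeg 2 M → ∀ r c, deg c ≠ deg r + 2 → M r c = 0 :=
    fun M hM r c hd => by by_contra hc; exact hd (hM r c hc)
  ext r c
  rcases r with u | j | p <;> rcases c with u' | j' | p'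
  · rw [hz M hM _ _ (by simp [deg]), hz N hN _ _ (by simp [deg])]
  · rw [hz M hM _ _ (by simp [deg]), hz N hN _ _ (by simp [deg])]
  · cases u; exact h p'.1 p'.2
  · rw [hz M hM _ _ (by simp [deg]), hz N hN _ _ (by simp [deg])]
  · rw [hz M hM _ _ (by simp [deg]), hz N hN _ _ (by simp [deg])]
  · rw [hz M hM _ _ (by simp [deg]), hz N hN _ _ (by simp [deg])]
  · rw [hz M hM _ _ (by simp [deg]), hz N hN _ _ (by simp [deg])]
  · rw [hz M hM _ _ (by simp [deg]), hz N hN _ _ (by simp [deg])]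
  · rw [hz M hM _ _ (by simp [deg]), hz N hN _ _ (by simp [deg])]

lemma phi_rel : ∀ ⦃a b : FreeAlgebra K (Fin n)⦄, commRel K n a b → phi K n a = phi K n b := by
  rintro _ _ ⟨i, k, hk1, hkn, rfl, rfl⟩
  rw [map_mul, map_mul]
  rcases eq_or_lt_of_le hk1 with h1 | h2
  · -- k = 1
    subst h1
    rw [elemPoly_one, map_sum]
    simp only [phi_ι]
    refine eq_of_hasDeg_two ((hasDeg_X i).mul (hasDeg_sum fun j _ => hasDeg_X j))
      ((hasDeg_sum fun j _ => hasDeg_X j).mul (hasDeg_X i)) fun a b => ?_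
    rw [Finset.mul_sum, Finset.sum_mul, Matrix.sum_apply, Matrix.sum_apply]
    simp only [X_mul_X_apply]
    exact pie_sum i a b
  · -- 2 ≤ k : both products vanish
    have hσ := hasDeg_phi_elemPoly (K := K) (n := n) k
    have hx : HasDeg 1 (phi K n (FreeAlgebra.ι K i)) := by rw [phi_ι]; exact hasDeg_X i
    rw [(hx.mul hσ).eq_zero (by omega), (hσ.mul hx).eq_zero (by omega)]

/-- the induced map on the quotient. -/
noncomputable def psi (K : Type*) [Field K] (n : ℕ) :
    Rquot K n →ₐ[K] Matrix (Idx n) (Idx n) K :=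
  RingQuot.liftAlgHom K ⟨phi K n, phi_rel⟩

lemma psi_mkR (x : FreeAlgebra K (Fin n)) : psi K n (mkR K n x) = phi K n x :=
  RingQuot.liftAlgHom_mkAlgHom_apply K (phi K n) phi_rel x

lemma psi_XR (i : Fin n) : psi K n (XR K n i) = Xmat K i := by
  rw [XR, psi_mkR, phi_ι]

/-- coefficient type -/
abbrev CT (K : Type*) [Field K] (n : ℕ) :=
  (Fin n → K) × ({p : Fin n × Fin n // p.1 < p.2} → K) ×
    ({p : Fin n × Fin n // (p.1 : ℕ) + 1 < (p.2 : ℕ)} → K)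

/-- the canonical-form combination -/
noncomputable def RHSfun (K : Type*) [Field K] (n : ℕ) (t : CT K n) : Rquot K n :=
  (∑ i : Fin n, t.1 i • (XR K n i * XR K n i)) +
  (∑ p : {p : Fin n × Fin n // p.1 < p.2}, t.2.1 p • (XR K n p.1.1 * XR K n p.1.2)) +
  ∑ p : {p : Fin n × Fin n // (p.1 : ℕ) + 1 < (p.2 : ℕ)},
    t.2.2 p • (XR K n p.1.1 * XR K n p.1.2 - XR K n p.1.2 * XR K n p.1.1)

lemma sumA_eval (f : Fin n → K) (a b : Fin n) :
    ∑ i : Fin n, f i • pie K i i a b = if a = b then f a else 0 := by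
  have hp : ∀ i : Fin n, pie K i i a b = if a = i ∧ b = i then 1 else 0 :=
    fun i => pie_of_ne_succ (by omega) a b
  by_cases hab : a = b
  · subst hab
    rw [Fintype.sum_eq_single a, if_pos rfl, hp a, if_pos ⟨rfl, rfl⟩, smul_eq_mul, mul_one]
    intro x hx
    rw [hp x, if_neg (fun hc => hx hc.1.symm), smul_zero]
  · rw [if_neg hab]
    refine Finset.sum_eq_zero fun i _ => ?_
    rw [hp i, if_neg (fun hc => hab (hc.1.trans hc.2.symm)), smul_zero]

lemma sumB_eval (g : {p : Fin n × Fin n // p.1 < p.2} → K) (a b : Fin n) :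
    ∑ p : {p : Fin n × Fin n // p.1 < p.2}, g p • pie K p.1.1 p.1.2 a b =
      if h : a < b then g ⟨(a, b), h⟩ else 0 := by
  have hp : ∀ p : {p : Fin n × Fin n // p.1 < p.2},
      pie K p.1.1 p.1.2 a b = if a = p.1.1 ∧ b = p.1.2 then 1 else 0 := by
    intro p
    have hlt : (p.1.1 : ℕ) < (p.1.2 : ℕ) := p.2
    exact pie_of_ne_succ (by omega) a b
  by_cases hab : a < b
  · rw [dif_pos hab,
      Fintype.sum_eq_single (⟨(a, b), hab⟩ : {p : Fin n × Fin n // p.1 < p.2})]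
    · rw [hp, if_pos ⟨rfl, rfl⟩, smul_eq_mul, mul_one]
    · intro q hq
      rw [hp, if_neg, smul_zero]
      rintro ⟨h1, h2⟩
      exact hq (Subtype.ext (Prod.ext h1.symm h2.symm))
  · rw [dif_neg hab]
    refine Finset.sum_eq_zero fun p _ => ?_
    rw [hp, if_neg, smul_zero]
    rintro ⟨h1, h2⟩
    exact hab (by rw [h1, h2]; exact p.2)

lemma sumC1_eval (g : {p : Fin n × Fin n // (p.1 : ℕ) + 1 < (p.2 : ℕ)} → K) (a b : Fin n) :
    ∑ p : {p : Fin n × Fin n // (p.1 : ℕ) + 1 < (p.2 : ℕ)}, g p • pie K p.1.1 p.1.2 a b =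
      if h : (a : ℕ) + 1 < (b : ℕ) then g ⟨(a, b), h⟩ else 0 := by
  have hp : ∀ p : {p : Fin n × Fin n // (p.1 : ℕ) + 1 < (p.2 : ℕ)},
      pie K p.1.1 p.1.2 a b = if a = p.1.1 ∧ b = p.1.2 then 1 else 0 := by
    intro p
    have hlt := p.2
    exact pie_of_ne_succ (by omega) a b
  by_cases hab : (a : ℕ) + 1 < (b : ℕ)
  · rw [dif_pos hab, Fintype.sum_eq_single
      (⟨(a, b), hab⟩ : {p : Fin n × Fin n // (p.1 : ℕ) + 1 < (p.2 : ℕ)})]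
    · rw [hp, if_pos ⟨rfl, rfl⟩, smul_eq_mul, mul_one]
    · intro q hq
      rw [hp, if_neg, smul_zero]
      rintro ⟨h1, h2⟩
      exact hq (Subtype.ext (Prod.ext h1.symm h2.symm))
  · rw [dif_neg hab]
    refine Finset.sum_eq_zero fun p _ => ?_
    rw [hp, if_neg, smul_zero]
    rintro ⟨h1, h2⟩
    exact hab (by rw [h1, h2]; exact p.2)

lemma sumC2_eval (g : {p : Fin n × Fin n // (p.1 : ℕ) + 1 < (p.2 : ℕ)} → K) (a b : Fin n) :
    ∑ p : {p : Fin n × Fin n // (p.1 : ℕ) + 1 < (p.2 : ℕ)}, g p • pie K p.1.2 p.1.1 a b =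
      if h : (b : ℕ) + 1 < (a : ℕ) then g ⟨(b, a), h⟩ else 0 := by
  have hp : ∀ p : {p : Fin n × Fin n // (p.1 : ℕ) + 1 < (p.2 : ℕ)},
      pie K p.1.2 p.1.1 a b = if a = p.1.2 ∧ b = p.1.1 then 1 else 0 := by
    intro p
    have hlt := p.2
    exact pie_of_ne_succ (by omega) a b
  by_cases hab : (b : ℕ) + 1 < (a : ℕ)
  · rw [dif_pos hab, Fintype.sum_eq_single
      (⟨(b, a), hab⟩ : {p : Fin n × Fin n // (p.1 : ℕ) + 1 < (p.2 : ℕ)})]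
    · rw [hp, if_pos ⟨rfl, rfl⟩, smul_eq_mul, mul_one]
    · intro q hq
      rw [hp, if_neg, smul_zero]
      rintro ⟨h1, h2⟩
      exact hq (Subtype.ext (Prod.ext h2.symm h1.symm))
  · rw [dif_neg hab]
    refine Finset.sum_eq_zero fun p _ => ?_
    rw [hp, if_neg, smul_zero]
    rintro ⟨h1, h2⟩
    exact hab (by rw [h1, h2]; exact p.2)

lemma entry_psi_RHS (t : CT K n) (a b : Fin n) :
    psi K n (RHSfun K n t) (Sum.inl ()) (Sum.inr (Sum.inr (a, b))) =
      (if a = b then t.1 a else 0)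
      + (if h : a < b then t.2.1 ⟨(a, b), h⟩ else 0)
      + ((if h : (a : ℕ) + 1 < (b : ℕ) then t.2.2 ⟨(a, b), h⟩ else 0)
        - (if h : (b : ℕ) + 1 < (a : ℕ) then t.2.2 ⟨(b, a), h⟩ else 0)) := by
  rw [RHSfun, map_add, map_add, map_sum, map_sum, map_sum]
  simp only [map_smul, map_mul, map_sub, psi_XR]
  simp only [Matrix.add_apply, Matrix.sum_apply, Matrix.smul_apply, Matrix.sub_apply,
    X_mul_X_apply, smul_sub]
  rw [Finset.sum_sub_distrib]
  rw [sumA_eval, sumB_eval, sumC1_eval, sumC2_eval]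

lemma RHS_injective {t t' : CT K n} (h : RHSfun K n t = RHSfun K n t') : t = t' := by
  have e : ∀ a b : Fin n,
      (if a = b then t.1 a else 0)
      + (if h : a < b then t.2.1 ⟨(a, b), h⟩ else 0)
      + ((if h : (a : ℕ) + 1 < (b : ℕ) then t.2.2 ⟨(a, b), h⟩ else 0)
        - (if h : (b : ℕ) + 1 < (a : ℕ) then t.2.2 ⟨(b, a), h⟩ else 0)) =
      (if a = b then t'.1 a else 0)
      + (if h : a < b then t'.2.1 ⟨(a, b), h⟩ else 0)
      + ((if h : (a : ℕ) + 1 < (b : ℕ) then t'.2.2 ⟨(a, b), h⟩ else 0)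
        - (if h : (b : ℕ) + 1 < (a : ℕ) then t'.2.2 ⟨(b, a), h⟩ else 0)) := by
    intro a b
    rw [← entry_psi_RHS, ← entry_psi_RHS, h]
  have h1 : t.1 = t'.1 := by
    funext i
    have hi := e i i
    have hio : ¬ ((i : ℕ) + 1 < (i : ℕ)) := by omega
    simp only [if_pos rfl, dif_neg (lt_irrefl i), dif_neg hio] at hi
    simpa using hi
  have h3 : t.2.2 = t'.2.2 := by
    funext p
    obtain ⟨⟨x, y⟩, hp⟩ := p
    have hp' : (x : ℕ) + 1 < (y : ℕ) := hp
    have hyx := e y x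
    have hne : ¬ (y = x) := fun hc => by
      have : (y : ℕ) = (x : ℕ) := congrArg Fin.val hc
      omega
    have hlt : ¬ (y < x) := fun hc => by
      have : (y : ℕ) < (x : ℕ) := hc
      omega
    have hlt2 : ¬ ((y : ℕ) + 1 < (x : ℕ)) := by omega
    simp only [if_neg hne, dif_neg hlt, dif_neg hlt2, dif_pos hp'] at hyx
    have : t.2.2 ⟨(x, y), hp'⟩ = t'.2.2 ⟨(x, y), hp'⟩ := by simpa using hyx
    exact this
  have h2 : t.2.1 = t'.2.1 := by
    funext p
    obtain ⟨⟨x, y⟩, hp⟩ := p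
    have hvlt : (x : ℕ) < (y : ℕ) := hp
    have hxy := e x y
    have hne : ¬ (x = y) := fun hc => by
      have : (x : ℕ) = (y : ℕ) := congrArg Fin.val hc
      omega
    simp only [if_neg hne, dif_pos hp, h3] at hxy
    have := add_right_cancel hxy
    simpa using this
  obtain ⟨ta, tb, tc⟩ := t
  obtain ⟨ta', tb', tc'⟩ := t'
  simp only at h1 h2 h3
  rw [h1, h2, h3]

/-! ### Existence -/

lemma RHSfun_add (t t' : CT K n) :
    RHSfun K n (t + t') = RHSfun K n t + RHSfun K n t' := by
  unfold RHSfun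
  simp only [Prod.fst_add, Prod.snd_add, Pi.add_apply, add_smul, Finset.sum_add_distrib]
  abel

lemma RHSfun_smul (c : K) (t : CT K n) :
    RHSfun K n (c • t) = c • RHSfun K n t := by
  unfold RHSfun
  simp only [Prod.smul_fst, Prod.smul_snd, Pi.smul_apply, smul_eq_mul, mul_smul]
  rw [← Finset.smul_sum, ← Finset.smul_sum, ← Finset.smul_sum, smul_add, smul_add]

lemma RHSfun_zero : RHSfun K n (0 : CT K n) = 0 := by
  simp [RHSfun]

lemma SA_delta (i : Fin n) (v : K) :
    ∑ k : Fin n, (if k = i then v else 0) • (XR K n k * XR K n k) =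
      v • (XR K n i * XR K n i) := by
  rw [Fintype.sum_eq_single i]
  · rw [if_pos rfl]
  · intro x hx; rw [if_neg hx, zero_smul]

lemma SB_delta (p0 : {p : Fin n × Fin n // p.1 < p.2}) (v : K) :
    ∑ p : {p : Fin n × Fin n // p.1 < p.2},
      (if p = p0 then v else 0) • (XR K n p.1.1 * XR K n p.1.2) =
      v • (XR K n p0.1.1 * XR K n p0.1.2) := by
  rw [Fintype.sum_eq_single p0]
  · rw [if_pos rfl]
  · intro x hx; rw [if_neg hx, zero_smul]

lemma SC_delta (p0 : {p : Fin n × Fin n // (p.1 : ℕ) + 1 < (p.2 : ℕ)}) (v : K) :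
    ∑ p : {p : Fin n × Fin n // (p.1 : ℕ) + 1 < (p.2 : ℕ)},
      (if p = p0 then v else 0) •
        (XR K n p.1.1 * XR K n p.1.2 - XR K n p.1.2 * XR K n p.1.1) =
      v • (XR K n p0.1.1 * XR K n p0.1.2 - XR K n p0.1.2 * XR K n p0.1.1) := by
  rw [Fintype.sum_eq_single p0]
  · rw [if_pos rfl]
  · intro x hx; rw [if_neg hx, zero_smul]

/-- the commutator in `R′` -/
noncomputable def comR (K : Type*) [Field K] (n : ℕ) (p q : Fin n) : Rquot K n :=
  XR K n p * XR K n q - XR K n q * XR K n p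

lemma comm_sum_zero (hn : 1 ≤ n) (p : Fin n) :
    ∑ q : Fin n, comR K n p q = 0 := by
  have hrel : mkR K n (FreeAlgebra.ι K p * elemPoly K n 1) =
      mkR K n (elemPoly K n 1 * FreeAlgebra.ι K p) :=
    RingQuot.mkAlgHom_rel K ⟨p, 1, le_refl 1, hn, rfl, rfl⟩
  have hσ : mkR K n (elemPoly K n 1) = ∑ q : Fin n, XR K n q := by
    rw [elemPoly_one, map_sum]; rfl
  have key : XR K n p * (∑ q : Fin n, XR K n q) = (∑ q : Fin n, XR K n q) * XR K n p := by
    rw [← hσ, XR, ← map_mul, ← map_mul, hrel]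
  unfold comR
  rw [Finset.sum_sub_distrib, ← Finset.mul_sum, ← Finset.sum_mul, key, sub_self]

lemma square_sum_zero [CharZero K] (s : Finset (Fin n)) :
    ∑ p ∈ s, ∑ q ∈ s, comR K n p q = 0 := by
  set S := ∑ p ∈ s, ∑ q ∈ s, comR K n p q with hSdef
  have hanti : ∀ p q : Fin n, comR K n p q = -comR K n q p := by
    intro p q; unfold comR; abel
  have h1 : S = ∑ q ∈ s, ∑ p ∈ s, comR K n p q := Finset.sum_comm
  have hS : S + S = 0 := by
    nth_rewrite 2 [h1]
    rw [← Finset.sum_add_distrib]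
    refine Finset.sum_eq_zero fun p _ => ?_
    rw [← Finset.sum_add_distrib]
    refine Finset.sum_eq_zero fun q _ => ?_
    unfold comR; abel
  have h2 : (2 : K) • S = 0 := by
    rw [two_smul]
    exact hS
  calc S = ((2⁻¹ : K) * 2) • S := by norm_num
    _ = (2⁻¹ : K) • ((2 : K) • S) := by rw [mul_smul]
    _ = 0 := by rw [h2, smul_zero]

lemma strip_sum_zero [CharZero K] (hn : 1 ≤ n) (j : Fin n) :
    ∑ p ∈ Finset.univ.filter (fun p : Fin n => (p : ℕ) ≤ (j : ℕ)),
      ∑ q ∈ Finset.univ.filter (fun q : Fin n => (j : ℕ) < (q : ℕ)), comR K n p q = 0 := by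
  have inner : ∀ p : Fin n,
      ∑ q ∈ Finset.univ.filter (fun q : Fin n => (j : ℕ) < (q : ℕ)), comR K n p q =
      -∑ q ∈ Finset.univ.filter (fun q : Fin n => ¬ (j : ℕ) < (q : ℕ)), comR K n p q := by
    intro p
    have hsplit := Finset.sum_filter_add_sum_filter_not Finset.univ
      (fun q : Fin n => (j : ℕ) < (q : ℕ)) (comR K n p)
    rw [comm_sum_zero hn p] at hsplit
    exact eq_neg_of_add_eq_zero_left hsplit
  rw [Finset.sum_congr rfl (fun p _ => inner p), Finset.sum_neg_distrib]
  have hfe : Finset.univ.filter (fun p : Fin n => (p : ℕ) ≤ (j : ℕ)) =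
      Finset.univ.filter (fun p : Fin n => ¬ (j : ℕ) < (p : ℕ)) := by
    ext x; simp [not_lt]
  rw [hfe, square_sum_zero, neg_zero]

lemma base4 [CharZero K] (hn : 1 ≤ n) (i j : Fin n) (hij : (i : ℕ) = (j : ℕ) + 1) :
    XR K n i * XR K n j = XR K n j * XR K n i +
      ∑ p : {p : Fin n × Fin n // (p.1 : ℕ) + 1 < (p.2 : ℕ)},
        (if (p.1.1 : ℕ) ≤ (j : ℕ) ∧ (j : ℕ) < (p.1.2 : ℕ) then (1 : K) else 0) •
          (XR K n p.1.1 * XR K n p.1.2 - XR K n p.1.2 * XR K n p.1.1) := by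
  set g : Fin n × Fin n → Rquot K n := fun x =>
    (if (x.1 : ℕ) ≤ (j : ℕ) ∧ (j : ℕ) < (x.2 : ℕ) then (1 : K) else 0) • comR K n x.1 x.2
    with hg
  have e1 : ∑ p : {p : Fin n × Fin n // (p.1 : ℕ) + 1 < (p.2 : ℕ)},
      (if (p.1.1 : ℕ) ≤ (j : ℕ) ∧ (j : ℕ) < (p.1.2 : ℕ) then (1 : K) else 0) •
        (XR K n p.1.1 * XR K n p.1.2 - XR K n p.1.2 * XR K n p.1.1) =
      ∑ x : Fin n × Fin n, if (x.1 : ℕ) + 1 < (x.2 : ℕ) then g x else 0 := by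
    rw [← Finset.sum_filter]
    exact (Finset.sum_subtype _ (by simp) g).symm
  have claim : ∀ x : Fin n × Fin n,
      (if (x.1 : ℕ) + 1 < (x.2 : ℕ) then g x else 0) =
        g x - (if x = (j, i) then comR K n j i else 0) := by
    intro x
    obtain ⟨x1, x2⟩ := x
    by_cases hP : (x1 : ℕ) + 1 < (x2 : ℕ)
    · rw [if_pos hP, if_neg, sub_zero]
      intro hc
      have h1 : x1 = j := congrArg Prod.fst hc
      have h2 : x2 = i := congrArg Prod.snd hc
      have := congrArg Fin.val h1
      have := congrArg Fin.val h2
      omega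
    · rw [if_neg hP]
      by_cases hx : ((x1, x2) : Fin n × Fin n) = (j, i)
      · have h1 : x1 = j := congrArg Prod.fst hx
        have h2 : x2 = i := congrArg Prod.snd hx
        subst h1; subst h2
        rw [if_pos rfl, hg]
        simp only
        rw [if_pos ⟨le_refl _, by omega⟩, one_smul, sub_self]
      · rw [if_neg hx, sub_zero, hg]
        simp only
        rw [if_neg, zero_smul]
        rintro ⟨c1, c2⟩
        refine hx ?_
        have hx1 : (x1 : ℕ) = (j : ℕ) := by omega
        have hx2 : (x2 : ℕ) = (i : ℕ) := by omega
        rw [Fin.ext hx1, Fin.ext hx2]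
  have e2 : ∑ x : Fin n × Fin n, (if (x.1 : ℕ) + 1 < (x.2 : ℕ) then g x else 0) =
      (∑ x : Fin n × Fin n, g x) - comR K n j i := by
    rw [Finset.sum_congr rfl (fun x _ => claim x), Finset.sum_sub_distrib]
    congr 1
    rw [Finset.sum_ite_eq' Finset.univ ((j, i) : Fin n × Fin n) (fun _ => comR K n j i)]
    simp
  have e3 : ∑ x : Fin n × Fin n, g x = 0 := by
    rw [Fintype.sum_prod_type]
    have hout : ∀ p : Fin n, ∑ q : Fin n, g (p, q) =
        (if (p : ℕ) ≤ (j : ℕ) then (1 : K) else 0) •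
          ∑ q ∈ Finset.univ.filter (fun q : Fin n => (j : ℕ) < (q : ℕ)), comR K n p q := by
      intro p
      by_cases hp : (p : ℕ) ≤ (j : ℕ)
      · rw [if_pos hp, one_smul, Finset.sum_filter]
        refine Finset.sum_congr rfl fun q _ => ?_
        rw [hg]
        simp only
        by_cases hq : (j : ℕ) < (q : ℕ)
        · rw [if_pos ⟨hp, hq⟩, if_pos hq, one_smul]
        · rw [if_neg (by tauto), if_neg hq, zero_smul]
      · rw [if_neg hp, zero_smul]
        refine Finset.sum_eq_zero fun q _ => ?_
        rw [hg]
        simp only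
        rw [if_neg (by tauto), zero_smul]
    rw [Finset.sum_congr rfl (fun p _ => hout p)]
    have : ∑ p : Fin n, (if (p : ℕ) ≤ (j : ℕ) then (1 : K) else 0) •
        ∑ q ∈ Finset.univ.filter (fun q : Fin n => (j : ℕ) < (q : ℕ)), comR K n p q =
        ∑ p ∈ Finset.univ.filter (fun p : Fin n => (p : ℕ) ≤ (j : ℕ)),
          ∑ q ∈ Finset.univ.filter (fun q : Fin n => (j : ℕ) < (q : ℕ)), comR K n p q := by
      rw [Finset.sum_filter]
      refine Finset.sum_congr rfl fun p _ => ?_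
      by_cases hp : (p : ℕ) ≤ (j : ℕ)
      · rw [if_pos hp, if_pos hp, one_smul]
      · rw [if_neg hp, if_neg hp, zero_smul]
    rw [this, strip_sum_zero hn j]
  rw [e1, e2, e3, zero_sub]
  unfold comR
  abel

lemma base [CharZero K] (hn : 3 ≤ n) (i j : Fin n) :
    ∃ t : CT K n, mkR K n (FreeAlgebra.ι K i * FreeAlgebra.ι K j) = RHSfun K n t := by
  have hn1 : 1 ≤ n := by omega
  have hmul : mkR K n (FreeAlgebra.ι K i * FreeAlgebra.ι K j) = XR K n i * XR K n j := by
    rw [map_mul]; rfl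
  rcases lt_trichotomy i j with hlt | heq | hgt
  · refine ⟨(0, fun p => if p = ⟨(i, j), hlt⟩ then (1 : K) else 0, 0), ?_⟩
    rw [hmul]
    unfold RHSfun
    simp only [Pi.zero_apply, zero_smul, Finset.sum_const_zero, zero_add, add_zero]
    rw [SB_delta ⟨(i, j), hlt⟩ 1, one_smul]
  · subst heq
    refine ⟨(fun k => if k = i then (1 : K) else 0, 0, 0), ?_⟩
    rw [hmul]
    unfold RHSfun
    simp only [Pi.zero_apply, zero_smul, Finset.sum_const_zero, zero_add, add_zero]
    rw [SA_delta i 1, one_smul]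
  · by_cases hadj : (i : ℕ) = (j : ℕ) + 1
    · refine ⟨(0, fun p => if p = ⟨(j, i), hgt⟩ then (1 : K) else 0,
        fun p => if (p.1.1 : ℕ) ≤ (j : ℕ) ∧ (j : ℕ) < (p.1.2 : ℕ) then (1 : K) else 0), ?_⟩
      rw [hmul]
      unfold RHSfun
      simp only [Pi.zero_apply, zero_smul, Finset.sum_const_zero, zero_add, add_zero]
      rw [SB_delta ⟨(j, i), hgt⟩ 1, one_smul]
      exact base4 hn1 i j hadj
    · have hnadj : (j : ℕ) + 1 < (i : ℕ) := by
        have : (j : ℕ) < (i : ℕ) := hgt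
        omega
      refine ⟨(0, fun p => if p = ⟨(j, i), hgt⟩ then (1 : K) else 0,
        fun p => if p = ⟨(j, i), hnadj⟩ then (-1 : K) else 0), ?_⟩
      rw [hmul]
      unfold RHSfun
      simp only [Pi.zero_apply, zero_smul, Finset.sum_const_zero, zero_add, add_zero]
      rw [SB_delta ⟨(j, i), hgt⟩ 1, SC_delta ⟨(j, i), hnadj⟩ (-1), one_smul]
      have h : ((-1 : K) • (XR K n j * XR K n i - XR K n i * XR K n j) : Rquot K n) =
          -(XR K n j * XR K n i - XR K n i * XR K n j) :=
        neg_one_smul K (XR K n j * XR K n i - XR K n i * XR K n j)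
      rw [h]
      abel

lemma exists_rep [CharZero K] (hn : 3 ≤ n) {q : FreeAlgebra K (Fin n)}
    (hq : q ∈ Submodule.span K
      {y : FreeAlgebra K (Fin n) | ∃ i j : Fin n, y = FreeAlgebra.ι K i * FreeAlgebra.ι K j}) :
    ∃ t : CT K n, mkR K n q = RHSfun K n t := by
  induction hq using Submodule.span_induction with
  | mem x hx =>
      obtain ⟨i, j, rfl⟩ := hx
      exact base hn i j
  | zero => exact ⟨0, by rw [map_zero, RHSfun_zero]⟩
  | add x y hx hy ihx ihy =>
      obtain ⟨t1, h1⟩ := ihx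
      obtain ⟨t2, h2⟩ := ihy
      exact ⟨t1 + t2, by rw [map_add, h1, h2, RHSfun_add]⟩
  | smul c x hx ih =>
      obtain ⟨t1, h1⟩ := ih
      exact ⟨c • t1, by rw [map_smul, h1, RHSfun_smul]⟩

end CanonQuad

/-- Canonical form of homogeneous quadratics in `R′`: for every homogeneous
quadratic element `q` of `P` (a `K`-linear combination of the products
`x_i x_j`), there are unique coefficients `a_i` (`i`), `b_{ij}` (`i < j`) and
`c_{ij}` (pairs with `i + 1 < j`, i.e. the one-based pairs `1 ≤ i < j < n`
indexing `[x_i, x_{j+1}]`) such that in `R′` the image of `q` equals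
`∑ a_i x_i² + ∑_{i<j} b_{ij} x_i x_j + ∑ c_{ij} [x_i, x_{j+1}]`. -/
theorem homogeneous_quadratic_canonical_form
    (K : Type*) [Field K] [CharZero K] (n : ℕ) (hn : 3 ≤ n)
    (q : FreeAlgebra K (Fin n))
    (hq : q ∈ Submodule.span K
      {y : FreeAlgebra K (Fin n) | ∃ i j : Fin n, y = FreeAlgebra.ι K i * FreeAlgebra.ι K j}) :
    ∃! t : (Fin n → K) × ({p : Fin n × Fin n // p.1 < p.2} → K) ×
        ({p : Fin n × Fin n // (p.1 : ℕ) + 1 < (p.2 : ℕ)} → K),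
      mkR K n q =
        (∑ i : Fin n, t.1 i • (XR K n i * XR K n i)) +
        (∑ p : {p : Fin n × Fin n // p.1 < p.2}, t.2.1 p • (XR K n p.1.1 * XR K n p.1.2)) +
        ∑ p : {p : Fin n × Fin n // (p.1 : ℕ) + 1 < (p.2 : ℕ)},
          t.2.2 p • (XR K n p.1.1 * XR K n p.1.2 - XR K n p.1.2 * XR K n p.1.1) := by
  obtain ⟨t, ht⟩ := CanonQuad.exists_rep hn hq
  refine ⟨t, ht, fun y hy => CanonQuad.RHS_injective (hy.symm.trans ht :
    CanonQuad.RHSfun K n y = CanonQuad.RHSfun K n t)⟩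
end

section
/- In R′, each elementary polynomial σ_k, k = 1,…,n, lies in the center of R′, and the family (σ_1, σ_2, …, σ_n), regarded as elements of the (commutative) center of R′, is algebraically independent over K; thus the σ_k generate a commutative polynomial domain K[σ_1,…,σ_n] inside the center of R′. -/
open Finset

/-!
Proof idea: each `σ_k` commutes with the generators of `R′`, hence is central.  Abelianizing,
`x_i ↦ X_i` factors through `R′ → K[X_1, …, X_n]` and sends `σ_k` to the elementary symmetric
polynomial `e_k`.  Since `e_1, …, e_n` are algebraically independent, so are `σ_1, …, σ_n`.
-/

theorem FreeAlgebra.mem_center_of_forall_commute_ι {R X A : Type*} [CommSemiring R] [Semiring A]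
    [Algebra R A] (f : FreeAlgebra R X →ₐ[R] A) (hf : Function.Surjective f) {a : A}
    (h : ∀ x, Commute (f (FreeAlgebra.ι R x)) a) : a ∈ Subalgebra.center R A := by
  rw [Subalgebra.mem_center_iff]
  intro b
  obtain ⟨p, rfl⟩ := hf b
  induction p using FreeAlgebra.induction with
  | grade0 r => rw [AlgHom.commutes, Algebra.commutes]
  | grade1 x => exact h x
  | add p q hp hq => rw [map_add, add_mul, mul_add, hp, hq]
  | mul p q hp hq => rw [map_mul, mul_assoc, hq, ← mul_assoc, hp, mul_assoc]

theorem MvPolynomial.algebraicIndependent_esymm (σ R : Type*) [Fintype σ] [CommRing R] {n : ℕ}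
    (hn : n ≤ Fintype.card σ) :
    AlgebraicIndependent R (fun i : Fin n => esymm σ R ((i : ℕ) + 1)) := by
  have hval : ⇑(aeval fun i : Fin n => esymm σ R ((i : ℕ) + 1)) =
      Subtype.val ∘ esymmAlgHom σ R n :=
    _root_.funext fun p => (esymmAlgHom_apply p).symm
  rw [algebraicIndependent_iff_injective_aeval, hval]
  exact Subtype.val_injective.comp (esymmAlgHom_injective R hn)

section Rquot

variable (K : Type*) [Field K] (n : ℕ)

theorem commute_XR_mkR_elemPoly (i : Fin n) {k : ℕ} (hk : 1 ≤ k) (hkn : k ≤ n) :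
    Commute (XR K n i) (mkR K n (elemPoly K n k)) := by
  rw [XR, Commute, SemiconjBy, ← map_mul, ← map_mul]
  exact RingQuot.mkAlgHom_rel K ⟨i, k, hk, hkn, rfl, rfl⟩

theorem mkR_elemPoly_mem_center {k : ℕ} (hk : 1 ≤ k) (hkn : k ≤ n) :
    mkR K n (elemPoly K n k) ∈ Subalgebra.center K (Rquot K n) :=
  FreeAlgebra.mem_center_of_forall_commute_ι (mkR K n) (RingQuot.mkAlgHom_surjective K _)
    fun i => commute_XR_mkR_elemPoly K n i hk hkn

theorem lift_X_elemPoly (k : ℕ) :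
    FreeAlgebra.lift K MvPolynomial.X (elemPoly K n k) = MvPolynomial.esymm (Fin n) K k := by
  rw [elemPoly, map_sum, MvPolynomial.esymm]
  refine Finset.sum_congr rfl fun s _ => ?_
  rw [map_list_prod, List.map_map, FreeAlgebra.ι_comp_lift, Finset.prod_eq_multiset_prod,
    ← Finset.sort_eq s (· ≤ ·), Multiset.map_coe, Multiset.prod_coe]

noncomputable def abelianize : Rquot K n →ₐ[K] MvPolynomial (Fin n) K :=
  RingQuot.liftAlgHom K ⟨FreeAlgebra.lift K MvPolynomial.X, by
    rintro _ _ ⟨i, k, -, -, rfl, rfl⟩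
    rw [map_mul, map_mul, mul_comm]⟩

theorem abelianize_mkR_elemPoly (k : ℕ) :
    abelianize K n (mkR K n (elemPoly K n k)) = MvPolynomial.esymm (Fin n) K k := by
  rw [abelianize, mkR, RingQuot.liftAlgHom_mkAlgHom_apply, lift_X_elemPoly]

end Rquot

theorem elemPoly_central_and_algebraicallyIndependent_general
    (K : Type*) [Field K] (n : ℕ) :
    ∃ hc : ∀ k : Fin n, mkR K n (elemPoly K n ((k : ℕ) + 1)) ∈ Subalgebra.center K (Rquot K n),
      AlgebraicIndependent K (fun k : Fin n =>
        (⟨mkR K n (elemPoly K n ((k : ℕ) + 1)), hc k⟩ : Subalgebra.center K (Rquot K n))) := by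
  refine ⟨fun k => mkR_elemPoly_mem_center K n k.succ_pos k.2, ?_⟩
  refine AlgebraicIndependent.of_comp ((abelianize K n).comp (Subalgebra.center K _).val) ?_
  convert MvPolynomial.algebraicIndependent_esymm (Fin n) K (Fintype.card_fin n).ge with k
  exact abelianize_mkR_elemPoly K n _

/-- In `R′`, each elementary polynomial `σ_k`, `1 ≤ k ≤ n`, is central, and the
family `(σ_1, …, σ_n)`, regarded as elements of the (commutative) center of `R′`,
is algebraically independent over `K`. -/
theorem elemPoly_central_and_algebraicallyIndependent
    (K : Type*) [Field K] [CharZero K] (n : ℕ) (hn : 3 ≤ n) :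
    ∃ hc : ∀ k : Fin n, mkR K n (elemPoly K n ((k : ℕ) + 1)) ∈ Subalgebra.center K (Rquot K n),
      AlgebraicIndependent K (fun k : Fin n =>
        (⟨mkR K n (elemPoly K n ((k : ℕ) + 1)), hc k⟩ : Subalgebra.center K (Rquot K n))) :=
  elemPoly_central_and_algebraicallyIndependent_general K n
end

section
/- In R′, each x_i is a root of the polynomial f(y) = y^n − σ_1y^{n−1} + σ_2y^{n−2} − ⋯ + (−1)^nσ_n: that is, for every i = 1,…,n one has ∑_{k=0}^{n} (−1)^k σ_k x_i^{n−k} = 0 in R′. -/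
open Finset

/-! Let `P(t) = ∏ⱼ (1 - xⱼ t)` in `R′⟦t⟧`, the factors taken in the order `x₁, …, xₙ`; its
`tᵏ`-coefficient is `(-1)ᵏ σₖ`. Since the `σₖ` commute with every `xⱼ`, `P(t)` commutes with every
factor. Writing `P(t) = A B` with `A = ∏_{j ≤ i} (1 - xⱼ t)` a unit, conjugation by `A` gives
`P(t) = B A`: the `σₖ` do not change when the variables are rotated cyclically so that `xᵢ`
comes last. Then `P(t) (1 - xᵢ t)⁻¹ = P(t) ∑ₘ xᵢᵐ tᵐ` is a product of `n - 1` linear factors, so its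
`tⁿ`-coefficient `∑ₖ (-1)ᵏ σₖ xᵢⁿ⁻ᵏ` vanishes. -/

namespace List

variable {S : Type*} [Ring S]

/-- `∑_{i₁ < ⋯ < iₖ} l[i₁] ⋯ l[iₖ]`, each product taken in list order. -/
def esymmNC : List S → ℕ → S
  | _, 0 => 1
  | [], _ + 1 => 0
  | a :: l, k + 1 => esymmNC l (k + 1) + a * esymmNC l k

@[simp] theorem esymmNC_zero (l : List S) : l.esymmNC 0 = 1 := by cases l <;> rfl

@[simp] theorem esymmNC_nil_succ (k : ℕ) : ([] : List S).esymmNC (k + 1) = 0 := rfl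

@[simp] theorem esymmNC_cons_succ (a : S) (l : List S) (k : ℕ) :
    (a :: l).esymmNC (k + 1) = l.esymmNC (k + 1) + a * l.esymmNC k := rfl

theorem esymmNC_eq_zero_of_length_lt : ∀ {l : List S} {k : ℕ}, l.length < k → l.esymmNC k = 0
  | [], _ + 1, _ => rfl
  | a :: l, k + 1, h => by
      have h' : l.length < k := by simpa using h
      simp [esymmNC_eq_zero_of_length_lt h', esymmNC_eq_zero_of_length_lt (h'.trans k.lt_succ_self)]

theorem map_esymmNC {T F : Type*} [Ring T] [FunLike F S T] [RingHomClass F S T] (f : F) :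
    ∀ (l : List S) (k : ℕ), (l.map f).esymmNC k = f (l.esymmNC k)
  | _, 0 => by simp
  | [], _ + 1 => by simp
  | a :: l, k + 1 => by simp [map_esymmNC f l]

end List

namespace Finset

theorem sum_powersetCard_succ_insert {α M : Type*} [DecidableEq α] [AddCommMonoid M] {a : α}
    {s : Finset α} (ha : a ∉ s) (k : ℕ) (f : Finset α → M) :
    ∑ u ∈ (insert a s).powersetCard (k + 1), f u =
      ∑ u ∈ s.powersetCard (k + 1), f u + ∑ u ∈ s.powersetCard k, f (insert a u) := by
  rw [powersetCard_succ_insert ha, sum_union, sum_image]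
  · exact insert_erase_invOn.2.injOn.mono fun u hu ↦ notMem_mono (mem_powersetCard.1 hu).1 ha
  · aesop (add simp [disjoint_left, insert_subset_iff, mem_powersetCard])

theorem esymmNC_map_sort {α S : Type*} [LinearOrder α] [Ring S] (φ : α → S) (s : Finset α)
    (k : ℕ) : ((s.sort (· ≤ ·)).map φ).esymmNC k =
      ∑ u ∈ s.powersetCard k, ((u.sort (· ≤ ·)).map φ).prod := by
  classical
  induction s using Finset.induction_on_min generalizing k with
  | empty =>
    cases k with
    | zero => simp
    | succ k => simp [powersetCard_eq_empty.2 (by simp : (∅ : Finset α).card < k + 1)]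
  | insert a s ha ih =>
    have has : a ∉ s := fun h ↦ lt_irrefl a (ha a h)
    have hsort : ∀ u ⊆ s, (insert a u).sort (· ≤ ·) = a :: u.sort (· ≤ ·) := fun u hu ↦
      sort_insert _ (fun b hb ↦ (ha b (hu hb)).le) (notMem_mono hu has)
    cases k with
    | zero => simp
    | succ k =>
      rw [hsort s subset_rfl, List.map_cons, List.esymmNC_cons_succ, ih, ih,
        sum_powersetCard_succ_insert has, mul_sum]
      refine congrArg _ (sum_congr rfl fun u hu ↦ ?_)
      rw [hsort u (mem_powersetCard.1 hu).1, List.map_cons, List.prod_cons]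

end Finset

namespace List

open PowerSeries

variable {S : Type*} [Ring S]

theorem prod_one_sub_C_mul_X (l : List S) :
    (l.map fun y ↦ 1 - C y * X).prod = mk fun k ↦ (-1) ^ k * l.esymmNC k := by
  induction l with
  | nil => ext (_ | _) <;> simp
  | cons a l ih =>
    rw [map_cons, prod_cons, ih]
    ext (_ | k)
    · simp [sub_mul, mul_assoc]
    · have hcomm : a * (-1) ^ k = (-1) ^ k * a := ((Commute.neg_one_right a).pow_right k).eq
      simp only [sub_mul, one_mul, mul_assoc, map_sub, coeff_C_mul, coeff_succ_X_mul, coeff_mk,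
        esymmNC_cons_succ, ← mul_assoc a, hcomm]
      noncomm_ring

theorem commute_mk_one_sub_C_mul_X {f : ℕ → S} {y : S} (h : ∀ k, Commute (f k) y) :
    Commute (mk f) (1 - C y * X) := by
  have hC : Commute (mk f) (C y) := by
    ext k
    simp [coeff_C_mul, coeff_mul_C, (h k).eq]
  exact (Commute.one_right _).sub_right (hC.mul_right (commute_X _))

theorem one_sub_C_mul_X_mul_mk_pow (x : S) : (1 - C x * X : S⟦X⟧) * mk (fun m ↦ x ^ m) = 1 := by
  ext (_ | m)
  · simp [sub_mul, mul_assoc]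
  · simp [sub_mul, mul_assoc, coeff_C_mul, coeff_succ_X_mul, pow_succ', coeff_one]

theorem esymmNC_append_comm {l₁ l₂ : List S}
    (h : ∀ k, ∀ y ∈ l₁, Commute ((l₁ ++ l₂).esymmNC k) y) :
    (l₁ ++ l₂).esymmNC = (l₂ ++ l₁).esymmNC := by
  let P : List S → S⟦X⟧ := fun l ↦ (l.map fun y ↦ 1 - C y * X).prod
  have hP : ∀ l, P l = mk fun k ↦ (-1) ^ k * l.esymmNC k := prod_one_sub_C_mul_X
  have hP_append : ∀ l l', P (l ++ l') = P l * P l' := by simp [P]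
  have hunit : IsUnit (P l₁) := by
    rw [isUnit_iff_constantCoeff, ← coeff_zero_eq_constantCoeff_apply, hP]
    simp
  have hcomm : Commute (P (l₁ ++ l₂)) (P l₁) := by
    refine Commute.list_prod_right _ _ fun z hz ↦ ?_
    obtain ⟨y, hy, rfl⟩ := mem_map.1 hz
    rw [hP]
    exact commute_mk_one_sub_C_mul_X fun k ↦
      ((Commute.neg_one_left y).pow_left k).mul_left (h k y hy)
  have hrot : P (l₂ ++ l₁) = P (l₁ ++ l₂) := by
    rw [hP_append] at hcomm ⊢
    exact hunit.mul_left_cancel (by rw [← mul_assoc, hcomm.eq, hP_append])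
  funext k
  simp only [hP] at hrot
  exact ((isUnit_neg_one.pow k).mul_left_cancel (by simpa using congrArg (coeff k) hrot)).symm

theorem sum_neg_one_pow_mul_esymmNC_append_singleton_mul_pow (l : List S) (x : S) :
    ∑ k ∈ Finset.range ((l ++ [x]).length + 1),
      (-1) ^ k * (l ++ [x]).esymmNC k * x ^ ((l ++ [x]).length - k) = 0 := by
  set f : ℕ → S := fun k ↦ (-1) ^ k * (l ++ [x]).esymmNC k
  have hcancel : mk f * mk (fun m ↦ x ^ m) = mk fun k ↦ (-1) ^ k * l.esymmNC k := by
    rw [← prod_one_sub_C_mul_X, ← prod_one_sub_C_mul_X, map_append, prod_append, map_singleton,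
      prod_singleton, mul_assoc, one_sub_C_mul_X_mul_mk_pow, mul_one]
  have hcoeff := congrArg (coeff (l ++ [x]).length) hcancel
  rw [coeff_mul, Nat.sum_antidiagonal_eq_sum_range_succ
    (fun p q ↦ coeff p (mk f) * coeff q (mk fun m ↦ x ^ m))] at hcoeff
  simpa [f, esymmNC_eq_zero_of_length_lt, mul_assoc] using hcoeff

theorem sum_neg_one_pow_mul_esymmNC_mul_pow_eq_zero {l : List S}
    (h : ∀ k, ∀ y ∈ l, Commute (l.esymmNC k) y) {x : S} (hx : x ∈ l) :
    ∑ k ∈ Finset.range (l.length + 1), (-1) ^ k * l.esymmNC k * x ^ (l.length - k) = 0 := by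
  obtain ⟨l₁, l₂, rfl⟩ := append_of_mem hx
  rw [append_cons] at h ⊢
  have hlen : (l₁ ++ [x] ++ l₂).length = (l₂ ++ l₁ ++ [x]).length := by simp; omega
  rw [esymmNC_append_comm fun k y hy ↦ h k y (mem_append_left _ hy), hlen, ← append_assoc]
  exact sum_neg_one_pow_mul_esymmNC_append_singleton_mul_pow (l₂ ++ l₁) x

end List

section Quotient

variable (K : Type*) [Field K] (n : ℕ)

theorem elemPoly_eq_esymmNC (k : ℕ) :
    elemPoly K n k = ((List.finRange n).map (FreeAlgebra.ι K)).esymmNC k := by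
  rw [elemPoly, ← Fin.sort_univ, Finset.esymmNC_map_sort]

theorem mkR_elemPoly (k : ℕ) :
    mkR K n (elemPoly K n k) = ((List.finRange n).map (XR K n)).esymmNC k := by
  rw [elemPoly_eq_esymmNC, ← List.map_esymmNC, List.map_map]
  rfl

theorem commute_mkR_elemPoly_XR (k : ℕ) (j : Fin n) :
    Commute (mkR K n (elemPoly K n k)) (XR K n j) := by
  rcases Nat.eq_zero_or_pos k with rfl | hk
  · simp [mkR_elemPoly]
  rcases le_or_gt k n with hkn | hnk
  · have hrel := RingQuot.mkAlgHom_rel K (s := commRel K n) ⟨j, k, hk, hkn, rfl, rfl⟩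
    simp only [map_mul] at hrel
    exact hrel.symm
  · rw [mkR_elemPoly, List.esymmNC_eq_zero_of_length_lt (by simpa)]
    exact Commute.zero_left _

end Quotient

theorem generators_are_roots_general
    (K : Type*) [Field K] (n : ℕ) (i : Fin n) :
    ∑ k ∈ Finset.range (n + 1),
      (-1 : Rquot K n) ^ k * mkR K n (elemPoly K n k) * XR K n i ^ (n - k) = 0 := by
  have hcomm : ∀ k, ∀ y ∈ (List.finRange n).map (XR K n),
      Commute (((List.finRange n).map (XR K n)).esymmNC k) y := by
    intro k y hy
    obtain ⟨j, -, rfl⟩ := List.mem_map.1 hy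
    rw [← mkR_elemPoly]
    exact commute_mkR_elemPoly_XR K n k j
  simpa only [List.length_map, List.length_finRange, mkR_elemPoly] using
    List.sum_neg_one_pow_mul_esymmNC_mul_pow_eq_zero hcomm
      (List.mem_map_of_mem (List.mem_finRange i))

/-- In `R′`, each `x_i` is a root of
`f(y) = y^n − σ_1 y^{n−1} + σ_2 y^{n−2} − ⋯ + (−1)^n σ_n`:
`∑_{k=0}^{n} (−1)^k σ_k x_i^{n−k} = 0`. -/
theorem generators_are_roots
    (K : Type*) [Field K] [CharZero K] (n : ℕ) (hn : 3 ≤ n) (i : Fin n) :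
    ∑ k ∈ Finset.range (n + 1),
      (-1 : Rquot K n) ^ k * mkR K n (elemPoly K n k) * XR K n i ^ (n - k) = 0 :=
  generators_are_roots_general K n i
end

section
/- The subalgebra P^G = {p ∈ P : p^g = p for all g ∈ G} of G-invariant elements of P is a free associative K-algebra on the orbit polynomials of the atoms: the K-algebra homomorphism from the free associative K-algebra on the set of atoms to P, which sends each atom a to its orbit polynomial \overline{x_a}, is injective and its image is exactly P^G. In particular, every G-invariant element of P is uniquely a polynomial, with coefficients in K, in the orbit polynomials \overline{x_a} of atoms a. -/
open Finset

/-- An atom: a nonempty word in the letters `{1,…,n}` (zero-based: `{0,…,n−1}`)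
beginning with the letter `1` (zero-based `0`) and with no two adjacent letters
equal — so the corresponding monomial begins with `x_1` and has all its
indeterminates to the first power. -/
def AtomWord (n : ℕ) : Type :=
  {w : List (Fin n) // (w.map Fin.val).head? = some 0 ∧ w.Chain' (· ≠ ·)}

/-- The monomial `x_w = x_{i(1)} ⋯ x_{i(d)}` of a word `w`. -/
noncomputable def wordMonomial (K : Type*) [Field K] (n : ℕ) (w : List (Fin n)) :
    FreeAlgebra K (Fin n) :=
  (w.map (FreeAlgebra.ι K)).prod

/-- The orbit polynomial `\overline{x_w} = ∑_{g ∈ G} (x_w)^g` of a word `w`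
(the group `G` of circular permutations has order `n`). -/
noncomputable def orbitPoly (K : Type*) [Field K] (n : ℕ) (w : List (Fin n)) :
    FreeAlgebra K (Fin n) :=
  ∑ m ∈ Finset.range n, (⇑(rotHom K n))^[m] (wordMonomial K n w)


/-!
Work in the monoid algebra `K[FreeMonoid G]` of a finite additive group `G` (for us `Fin n`),
on which the rotation acts by translating letters. Cutting a word between equal adjacent letters
splits it into runs, and each run is a translate of a unique atom; a word is determined by its
first letter and its atoms. The product of the orbit sums of atoms `a₁, …, a_k` is the sum, each
with coefficient one, of the concatenations of translates of the `aᵢ`. Such a word has at most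
`k` runs, with equality exactly when its atoms are `a₁, …, a_k`. This unitriangularity with
respect to the number of runs gives the linear independence of these products, and, by
induction on the number of runs, that they span the translation-invariant elements.
-/

namespace List

variable {α : Type*} {r : α → α → Bool}

theorem splitBy_append_eq_cons_append {l m g : List α} {gs : List (List α)}
    (hl : l.IsChain fun x y ↦ r x y) (hm : m.splitBy r = g :: gs)
    (h : ∀ x ∈ l.getLast?, ∀ y ∈ m.head?, r x y) :
    (l ++ m).splitBy r = (l ++ g) :: gs := by
  obtain ⟨hflat, hnil, hchain, hbd⟩ := splitBy_eq_iff.mp hm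
  have hg : g ≠ [] := fun h ↦ hnil (h ▸ mem_cons_self)
  have hhead : m.head? = g.head? := by
    obtain ⟨a, t, rfl⟩ := exists_cons_of_ne_nil hg
    simp [hflat]
  rw [splitBy_eq_iff]
  refine ⟨by simp [hflat], by simp_all, ?_, ?_⟩
  · simp only [List.mem_cons, forall_eq_or_imp] at hchain ⊢
    exact ⟨isChain_append.mpr ⟨hl, hchain.1, hhead ▸ h⟩, hchain.2⟩
  · rw [isChain_cons] at hbd ⊢
    refine ⟨fun b hb ↦ ?_, hbd.2⟩
    obtain ⟨ha, hb', H⟩ := hbd.1 b hb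
    exact ⟨by simp [hg], hb', by rwa [getLast_append_of_ne_nil _ hg]⟩

theorem splitBy_flatten_eq_or_length_lt {L : List (List α)} (hL : [] ∉ L)
    (hc : ∀ l ∈ L, l.IsChain fun x y ↦ r x y) :
    L.flatten.splitBy r = L ∨ (L.flatten.splitBy r).length < L.length := by
  induction L with
  | nil => simp
  | cons l L ih =>
    simp only [List.mem_cons, not_or, forall_eq_or_imp] at hL hc
    specialize ih hL.2 hc.2
    rw [flatten_cons]
    by_cases hbd : ∀ x ∈ l.getLast?, ∀ y ∈ L.flatten.head?, r x y = false
    · rw [splitBy_append hbd, splitBy_of_isChain (Ne.symm hL.1) hc.1]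
      rcases ih with h | h <;> simp [h]
    · push Not at hbd
      obtain ⟨x, hx, y, hy, hxy⟩ := hbd
      obtain ⟨g, gs, hm⟩ := exists_cons_of_ne_nil
        (splitBy_ne_nil.mpr (ne_nil_of_mem (mem_of_mem_head? hy)))
      rw [splitBy_append_eq_cons_append hc.1 hm (by simp_all)]
      rw [hm] at ih
      right
      rcases ih with h | h
      · simp [← h]
      · simp only [length_cons] at h ⊢
        omega

end List

namespace CyclicInvariants

open List

section Runs

variable {α : Type*} [DecidableEq α]

def runs (u : List α) : List (List α) := u.splitBy (· != ·)

lemma isChain_of_mem_runs {u r : List α} (h : r ∈ runs u) : r.IsChain (· ≠ ·) := by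
  simpa using isChain_of_mem_splitBy h

end Runs

section Words

variable {G : Type*} [AddGroup G]

def shift (c : G) (w : List G) : List G := w.map (· + c)

def IsAtom (w : List G) : Prop := w.head? = some 0 ∧ w.IsChain (· ≠ ·)

def normalize (w : List G) : List G := shift (-w.headD 0) w

@[simp] lemma shift_append (c : G) (u v : List G) : shift c (u ++ v) = shift c u ++ shift c v :=
  map_append

@[simp] lemma shift_eq_nil {c : G} {w : List G} : shift c w = [] ↔ w = [] := map_eq_nil_iff

lemma shift_shift (c d : G) (w : List G) : shift c (shift d w) = shift (d + c) w := by
  simp [shift, Function.comp_def, add_assoc]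

@[simp] lemma shift_zero (w : List G) : shift 0 w = w := by simp [shift]

lemma head?_shift (c : G) (w : List G) : (shift c w).head? = w.head?.map (· + c) := head?_map

lemma isChain_ne_shift {c : G} {w : List G} :
    (shift c w).IsChain (· ≠ ·) ↔ w.IsChain (· ≠ ·) := by
  simp [shift, isChain_map]

lemma shift_append_inj {a : List G} (ha : a ≠ []) {c d : G} {v w : List G}
    (h : shift c a ++ v = shift d a ++ w) : c = d := by
  obtain ⟨x, t, rfl⟩ := exists_cons_of_ne_nil ha
  simpa [shift] using congrArg head? h

lemma IsAtom.ne_nil {a : List G} (ha : IsAtom a) : a ≠ [] :=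
  ne_nil_of_mem (mem_of_mem_head? ha.1)

lemma shift_normalize (w : List G) : shift (w.headD 0) (normalize w) = w := by
  simp [normalize, shift_shift]

lemma normalize_shift {a : List G} (ha : IsAtom a) (c : G) : normalize (shift c a) = a := by
  obtain ⟨t, rfl⟩ := head?_eq_some_iff.mp ha.1
  simp [normalize, shift_shift, head?_shift]

lemma isAtom_normalize {w : List G} (hw : w ≠ []) (hc : w.IsChain (· ≠ ·)) :
    IsAtom (normalize w) := by
  obtain ⟨x, t, rfl⟩ := exists_cons_of_ne_nil hw
  exact ⟨by simp [normalize, head?_shift], isChain_ne_shift.mpr hc⟩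

def IsConcatOfShifts (A : List (List G)) (u : List G) : Prop :=
  ∃ L, Forall₂ (fun a l ↦ ∃ c, l = shift c a) A L ∧ u = L.flatten

lemma isConcatOfShifts_nil {u : List G} : IsConcatOfShifts [] u ↔ u = [] := by
  simp [IsConcatOfShifts]

lemma isConcatOfShifts_cons {a : List G} {A : List (List G)} {u : List G} :
    IsConcatOfShifts (a :: A) u ↔ ∃ c v, u = shift c a ++ v ∧ IsConcatOfShifts A v := by
  simp only [IsConcatOfShifts, forall₂_cons_left_iff]
  constructor
  · rintro ⟨_, ⟨l, L, ⟨c, rfl⟩, hAL, rfl⟩, rfl⟩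
    exact ⟨c, L.flatten, rfl, L, hAL, rfl⟩
  · rintro ⟨c, v, rfl, L, hAL, rfl⟩
    exact ⟨_, ⟨_, L, ⟨c, rfl⟩, hAL, rfl⟩, rfl⟩

/-- Each block starts with the last letter of the previous one, so consecutive blocks meet in a
pair of equal letters and the blocks are exactly the runs of the result. -/
def joinShifted : List (List G) → G → List G
  | [], _ => []
  | a :: A, c => shift c a ++ joinShifted A ((shift c a).getLastD c)

lemma shift_joinShifted (d : G) : ∀ (A : List (List G)) (c : G),
    shift d (joinShifted A c) = joinShifted A (c + d)
  | [], _ => rfl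
  | a :: A, c => by
    simp only [joinShifted, shift_append, shift_shift, shift_joinShifted d A]
    rw [← shift_shift]
    exact congrArg _ (congrArg _ (getLastD_map (f := (· + d))).symm)

lemma head?_joinShifted {A : List (List G)} (hA : ∀ a ∈ A, IsAtom a) (c : G) :
    ∀ x ∈ (joinShifted A c).head?, x = c := by
  cases A with
  | nil => simp [joinShifted]
  | cons a A =>
    obtain ⟨t, ht⟩ := head?_eq_some_iff.mp (hA a mem_cons_self).1
    simp [joinShifted, ht, shift]

lemma joinShifted_map_normalize {L : List (List G)} (hL : [] ∉ L)
    (hbd : L.IsChain fun a b ↦ ∃ ha hb, a.getLast ha = b.head hb) {c : G}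
    (hc : ∀ y ∈ L.flatten.head?, y = c) : joinShifted (L.map normalize) c = L.flatten := by
  induction L generalizing c with
  | nil => rfl
  | cons r L ih =>
    simp only [List.mem_cons, not_or] at hL
    obtain ⟨x, t, rfl⟩ := exists_cons_of_ne_nil (Ne.symm hL.1)
    obtain rfl : x = c := hc x (by simp)
    rw [isChain_cons] at hbd
    have hr : shift x (normalize (x :: t)) = x :: t := shift_normalize (x :: t)
    rw [List.map_cons, joinShifted, hr, flatten_cons, ih hL.2 hbd.2]
    intro y hy
    cases L with
    | nil => simp at hy
    | cons b L =>
      obtain ⟨ha, hb, H⟩ := hbd.1 b rfl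
      obtain ⟨z, s, rfl⟩ := exists_cons_of_ne_nil hb
      simp only [flatten_cons, cons_append, head?_cons, Option.mem_def, Option.some.injEq] at hy
      simp_all [getLastD_eq_getLast?, getLast?_eq_some_getLast]

variable [DecidableEq G]

def atoms (u : List G) : List (List G) := (runs u).map normalize

lemma length_atoms (u : List G) : (atoms u).length = (runs u).length := length_map _

lemma isAtom_of_mem_atoms {u a : List G} (h : a ∈ atoms u) : IsAtom a := by
  obtain ⟨r, hr, rfl⟩ := mem_map.mp h
  exact isAtom_normalize (ne_nil_of_mem_splitBy hr) (isChain_of_mem_runs hr)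

lemma isConcatOfShifts_atoms (u : List G) : IsConcatOfShifts (atoms u) u :=
  ⟨runs u,
    forall₂_map_left_iff.mpr (forall₂_same.mpr fun r _ ↦ ⟨_, (shift_normalize r).symm⟩),
    (flatten_splitBy _ u).symm⟩

lemma atoms_eq_of_isConcatOfShifts {A : List (List G)} {u : List G} (hA : ∀ a ∈ A, IsAtom a)
    (h : IsConcatOfShifts A u) (hlen : A.length ≤ (runs u).length) : atoms u = A := by
  obtain ⟨L, hAL, rfl⟩ := h
  have hL : (∀ l ∈ L, l ≠ [] ∧ l.IsChain (· ≠ ·)) ∧ L.map normalize = A := by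
    clear hlen
    induction hAL with
    | nil => simp
    | cons hal _ ih =>
      simp only [List.mem_cons, forall_eq_or_imp] at hA ⊢
      obtain ⟨c, rfl⟩ := hal
      refine ⟨⟨⟨shift_eq_nil.not.mpr hA.1.ne_nil, isChain_ne_shift.mpr hA.1.2⟩, (ih hA.2).1⟩, ?_⟩
      rw [List.map_cons, normalize_shift hA.1, (ih hA.2).2]
  have hruns := splitBy_flatten_eq_or_length_lt (r := (· != ·)) (L := L)
    (fun h ↦ (hL.1 [] h).1 rfl) (fun l hl ↦ by simpa using (hL.1 l hl).2)
  rw [← hL.2, length_map] at hlen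
  rw [atoms, runs, hruns.resolve_right (by simpa [runs] using hlen), hL.2]

lemma atoms_joinShifted {A : List (List G)} (hA : ∀ a ∈ A, IsAtom a) (c : G) :
    atoms (joinShifted A c) = A := by
  induction A generalizing c with
  | nil => rfl
  | cons a A ih =>
    simp only [List.mem_cons, forall_eq_or_imp] at hA
    have hruns : runs (joinShifted (a :: A) c) =
        shift c a :: runs (joinShifted A ((shift c a).getLastD c)) := by
      rw [joinShifted, runs, splitBy_append, splitBy_of_isChain (shift_eq_nil.not.mpr hA.1.ne_nil)]
      · rfl
      · simpa using isChain_ne_shift.mpr hA.1.2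
      · intro x hx y hy
        rw [head?_joinShifted hA.2 _ y hy, getLastD_eq_getLast?, hx]
        simp
    rw [atoms, hruns, List.map_cons, normalize_shift hA.1, ← atoms, ih hA.2]

lemma joinShifted_atoms (u : List G) : joinShifted (atoms u) (u.headD 0) = u := by
  conv_rhs => rw [← flatten_splitBy (· != ·) u]
  refine joinShifted_map_normalize (nil_notMem_splitBy _ u)
    ((isChain_getLast_head_splitBy _ u).imp fun _ _ ⟨ha, hb, H⟩ ↦ ⟨ha, hb, by simpa using H⟩) ?_
  intro y hy
  simp_all [headD_eq_head?_getD]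

lemma joinShifted_atoms_zero (u : List G) : joinShifted (atoms u) 0 = normalize u := by
  calc joinShifted (atoms u) 0 = joinShifted (atoms u) (u.headD 0 + -u.headD 0) := by
        rw [add_neg_cancel]
    _ = normalize u := by rw [← shift_joinShifted, joinShifted_atoms]; rfl

end Words

section MonoidAlgebra

open MonoidAlgebra

variable (K : Type*) [CommRing K]

lemma coeff_single_mul_ofList_append {α : Type*} (p w : List α) (f : K[FreeMonoid α]) :
    (single (FreeMonoid.ofList p) 1 * f).coeff (FreeMonoid.ofList (p ++ w)) =
      f.coeff (FreeMonoid.ofList w) := by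
  rw [coeff_single_mul_eq_mul_coeff (FreeMonoid.ofList w), one_mul]
  intro m _
  rw [FreeMonoid.ofList_append, mul_right_inj]

lemma coeff_single_mul_ofList_of_forall_ne {α : Type*} {p u : List α} (h : ∀ w, u ≠ p ++ w)
    (f : K[FreeMonoid α]) :
    (single (FreeMonoid.ofList p) 1 * f).coeff (FreeMonoid.ofList u) = 0 :=
  coeff_single_mul_of_forall_mul_ne _ _ fun w hw ↦
    h w.toList (by simpa using (congrArg FreeMonoid.toList hw).symm)

variable {G : Type*} [AddGroup G]

noncomputable def translate (c : G) : K[FreeMonoid G] →ₐ[K] K[FreeMonoid G] :=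
  mapDomainAlgHom K K (FreeMonoid.map (· + c))

lemma translate_single (c : G) (w : List G) (r : K) :
    translate K c (single (FreeMonoid.ofList w) r) = single (FreeMonoid.ofList (shift c w)) r := by
  rw [translate, mapDomainAlgHom_apply, mapDomain_single]
  rfl

lemma coeff_translate (c : G) (f : K[FreeMonoid G]) (w : List G) :
    (translate K c f).coeff (FreeMonoid.ofList (shift c w)) = f.coeff (FreeMonoid.ofList w) := by
  have hinj : Function.Injective (FreeMonoid.map (· + c : G → G)) := fun x y h ↦
    FreeMonoid.toList.injective (map_injective_iff.mpr (add_left_injective c)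
      (by simpa using congrArg FreeMonoid.toList h))
  rw [translate, mapDomainAlgHom_apply, coeff_mapDomain]
  exact Finsupp.mapDomain_apply hinj _ _

lemma translate_zero (f : K[FreeMonoid G]) : translate K 0 f = f := by
  have : FreeMonoid.map (· + (0 : G)) = MonoidHom.id _ := FreeMonoid.hom_eq fun x ↦ by simp
  rw [translate, this, mapDomainAlgHom_id]
  rfl

lemma translate_translate (c d : G) (f : K[FreeMonoid G]) :
    translate K c (translate K d f) = translate K (d + c) f := by
  simp only [translate, ← AlgHom.comp_apply, ← mapDomainAlgHom_comp, ← FreeMonoid.map_comp]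
  congr 3
  ext x
  exact add_assoc x d c

lemma coeff_normalize_of_forall_translate_eq {f : K[FreeMonoid G]}
    (hf : ∀ c, translate K c f = f) (u : List G) :
    f.coeff (FreeMonoid.ofList (normalize u)) = f.coeff (FreeMonoid.ofList u) := by
  rw [normalize, ← coeff_translate K (-u.headD 0) f u, hf]

variable [Fintype G]

noncomputable def orbitSum (a : List G) : K[FreeMonoid G] :=
  ∑ c : G, single (FreeMonoid.ofList (shift c a)) 1

noncomputable def orbitProd (A : List (List G)) : K[FreeMonoid G] := (A.map (orbitSum K)).prod

lemma translate_orbitSum (c : G) (a : List G) : translate K c (orbitSum K a) = orbitSum K a := by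
  simp only [orbitSum, map_sum, translate_single, shift_shift]
  exact Fintype.sum_equiv (Equiv.addRight c) _ _ fun _ ↦ rfl

lemma translate_orbitProd (c : G) (A : List (List G)) :
    translate K c (orbitProd K A) = orbitProd K A := by
  simp [orbitProd, map_list_prod, Function.comp_def, translate_orbitSum]

open Classical in
lemma coeff_orbitProd {A : List (List G)} (hA : [] ∉ A) (u : List G) :
    (orbitProd K A).coeff (FreeMonoid.ofList u) = if IsConcatOfShifts A u then 1 else 0 := by
  induction A generalizing u with
  | nil =>
    rw [orbitProd, List.map_nil, List.prod_nil, one_def, coeff_single, Finsupp.single_apply,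
      isConcatOfShifts_nil]
    simp only [eq_comm (a := (1 : FreeMonoid G)),
      FreeMonoid.ofList.injective.eq_iff' FreeMonoid.ofList_nil]
    congr
  | cons a A ih =>
    simp only [List.mem_cons, not_or] at hA
    rw [orbitProd, List.map_cons, List.prod_cons, ← orbitProd, orbitSum, Finset.sum_mul,
      coeff_sum, Finsupp.finsetSum_apply]
    by_cases h : IsConcatOfShifts (a :: A) u
    · obtain ⟨c₀, v, rfl, hv⟩ := isConcatOfShifts_cons.mp h
      rw [if_pos h, Finset.sum_eq_single c₀ ?_ (by simp), coeff_single_mul_ofList_append, ih hA.2,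
        if_pos hv]
      intro c _ hc
      exact coeff_single_mul_ofList_of_forall_ne K
        (fun w hw ↦ hc (shift_append_inj (Ne.symm hA.1) hw).symm) _
    · rw [if_neg h]
      refine Finset.sum_eq_zero fun c _ ↦ ?_
      by_cases hp : ∃ w, u = shift c a ++ w
      · obtain ⟨w, rfl⟩ := hp
        rw [coeff_single_mul_ofList_append, ih hA.2,
          if_neg fun hw ↦ h (isConcatOfShifts_cons.mpr ⟨c, w, rfl, hw⟩)]
      · exact coeff_single_mul_ofList_of_forall_ne K (not_exists.mp hp) _

variable [DecidableEq G]

open Classical in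
lemma coeff_orbitProd_of_length_le {A : List (List G)} (hA : ∀ a ∈ A, IsAtom a) {u : List G}
    (hlen : A.length ≤ (runs u).length) :
    (orbitProd K A).coeff (FreeMonoid.ofList u) = if atoms u = A then 1 else 0 := by
  rw [coeff_orbitProd K fun h ↦ (hA [] h).ne_nil rfl]
  congr 1
  exact propext ⟨fun h ↦ atoms_eq_of_isConcatOfShifts hA h hlen,
    fun h ↦ h ▸ isConcatOfShifts_atoms u⟩

theorem linearIndepOn_orbitProd :
    LinearIndepOn K (orbitProd K) {A : List (List G) | ∀ a ∈ A, IsAtom a} := by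
  classical
  rw [LinearIndepOn, linearIndependent_iff']
  intro s g hsum
  by_contra! hne
  obtain ⟨A₀, hA₀, hmax⟩ := (s.filter (g · ≠ 0)).exists_max_image (fun A ↦ A.1.length)
    (by simpa [Finset.Nonempty] using hne)
  rw [Finset.mem_filter] at hA₀
  have hatoms : atoms (joinShifted A₀.1 0) = A₀.1 := atoms_joinShifted A₀.2 0
  have hcoeff := congrArg (fun f ↦ f.coeff (FreeMonoid.ofList (joinShifted A₀.1 0))) hsum
  simp only [coeff_sum, coeff_smul, Finsupp.finsetSum_apply, Finsupp.smul_apply, smul_eq_mul,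
    coeff_zero, Finsupp.coe_zero, Pi.zero_apply] at hcoeff
  rw [Finset.sum_eq_single_of_mem A₀ hA₀.1, coeff_orbitProd_of_length_le K A₀.2
    (by rw [← length_atoms, hatoms]), if_pos hatoms, mul_one] at hcoeff
  · exact hA₀.2 hcoeff
  intro A hA hAA₀
  by_cases hg : g A = 0
  · rw [hg, zero_mul]
  have hlen : A.1.length ≤ (runs (joinShifted A₀.1 0)).length := by
    rw [← length_atoms, hatoms]
    exact hmax A (Finset.mem_filter.mpr ⟨hA, hg⟩)
  rw [coeff_orbitProd_of_length_le K A.2 hlen, hatoms,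
    if_neg (Subtype.coe_ne_coe.mpr hAA₀.symm), mul_zero]

theorem mem_span_orbitProd_of_forall_translate_eq {f : K[FreeMonoid G]}
    (hf : ∀ c, translate K c f = f) :
    f ∈ Submodule.span K (orbitProd K '' {A : List (List G) | ∀ a ∈ A, IsAtom a}) := by
  classical
  suffices ∀ N f, (∀ c, translate K c f = f) →
      (∀ u : List G, N ≤ (runs u).length → f.coeff (FreeMonoid.ofList u) = 0) →
      f ∈ Submodule.span K (orbitProd K '' {A : List (List G) | ∀ a ∈ A, IsAtom a}) by
    refine this ((f.coeff.support.sup fun w ↦ (runs w.toList).length) + 1) f hf fun u hu ↦ ?_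
    by_contra h
    have := Finset.le_sup (f := fun w ↦ (runs w.toList).length) (Finsupp.mem_support_iff.mpr h)
    exact absurd hu (by simpa using this)
  intro N
  induction N with
  | zero =>
    intro f _ hvan
    convert Submodule.zero_mem _
    exact MonoidAlgebra.ext (Finsupp.ext fun w ↦ hvan w.toList (Nat.zero_le _))
  | succ N ih =>
    intro f hf hvan
    set T := (f.coeff.support.filter fun w ↦ (runs w.toList).length = N).image
      fun w ↦ atoms w.toList
    have hT : ∀ A ∈ T, (∀ a ∈ A, IsAtom a) ∧ A.length = N := by
      intro A hA
      obtain ⟨w, hw, rfl⟩ := Finset.mem_image.mp hA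
      exact ⟨fun a ↦ isAtom_of_mem_atoms, by rw [length_atoms, (Finset.mem_filter.mp hw).2]⟩
    set g := f - ∑ A ∈ T, f.coeff (FreeMonoid.ofList (joinShifted A 0)) • orbitProd K A
    have hg_inv : ∀ c, translate K c g = g := by
      simp [g, map_sum, translate_orbitProd, hf]
    have hg_van : ∀ u : List G, N ≤ (runs u).length → g.coeff (FreeMonoid.ofList u) = 0 := by
      intro u hu
      simp only [g, coeff_sub, coeff_sum, coeff_smul, Finsupp.coe_sub, Pi.sub_apply,
        Finsupp.finsetSum_apply, Finsupp.smul_apply, smul_eq_mul]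
      rw [Finset.sum_congr rfl fun A hA ↦ by
        rw [coeff_orbitProd_of_length_le K (hT A hA).1 ((hT A hA).2 ▸ hu), mul_ite, mul_one,
          mul_zero]]
      rw [Finset.sum_ite_eq, joinShifted_atoms_zero, coeff_normalize_of_forall_translate_eq K hf]
      split_ifs with hmem
      · exact sub_self _
      rw [sub_zero]
      rcases hu.lt_or_eq with hlt | heq
      · exact hvan u hlt
      by_contra h
      exact hmem (Finset.mem_image_of_mem _
        (Finset.mem_filter.mpr ⟨Finsupp.mem_support_iff.mpr h, heq.symm⟩))
    rw [← sub_add_cancel f (∑ A ∈ T, _)]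
    refine add_mem (ih g hg_inv hg_van) (Submodule.sum_mem _ fun A hA ↦ Submodule.smul_mem _ _ ?_)
    exact Submodule.subset_span ⟨A, (hT A hA).1, rfl⟩

end MonoidAlgebra

section FreeAlgebra

open MonoidAlgebra FreeAlgebra

variable (K : Type*) [CommRing K]

lemma equivMonoidAlgebraFreeMonoid_prod_map_ι {X : Type*} (w : List X) :
    equivMonoidAlgebraFreeMonoid ((w.map (ι K)).prod) = single (FreeMonoid.ofList w) (1 : K) := by
  induction w with
  | nil => rw [List.map_nil, List.prod_nil, map_one, FreeMonoid.ofList_nil, one_def]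
  | cons x w ih =>
    rw [List.map_cons, List.prod_cons, map_mul, ih, FreeMonoid.ofList_cons]
    simp [equivMonoidAlgebraFreeMonoid]

variable {G : Type*} [AddGroup G] [Fintype G] {X : Type*} (atom : X → List G)

lemma lift_orbitSum_basisFreeMonoid (w : FreeMonoid X) :
    lift K (fun x ↦ orbitSum K (atom x)) (basisFreeMonoid K X w) =
      orbitProd K (w.toList.map atom) := by
  have : basisFreeMonoid K X w = (w.toList.map (ι K)).prod :=
    AlgEquiv.symm_apply_eq _ |>.mpr (equivMonoidAlgebraFreeMonoid_prod_map_ι K w.toList).symm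
  simp [this, map_list_prod, orbitProd, Function.comp_def]

variable [DecidableEq G]

theorem injective_lift_orbitSum (hatom : ∀ x, IsAtom (atom x)) (hinj : Function.Injective atom) :
    Function.Injective (lift K fun x ↦ orbitSum K (atom x)) := by
  set b := basisFreeMonoid K X
  let toAtoms (w : FreeMonoid X) : {A : List (List G) | ∀ a ∈ A, IsAtom a} :=
    ⟨w.toList.map atom, by simpa using fun x _ ↦ hatom x⟩
  have hv : LinearIndependent K fun w : FreeMonoid X ↦ orbitProd K (w.toList.map atom) :=
    (linearIndepOn_orbitProd K).linearIndependent.comp toAtoms fun v w h ↦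
      FreeMonoid.toList.injective (map_injective_iff.mpr hinj (congrArg Subtype.val h))
  have hconstr : (lift K fun x ↦ orbitSum K (atom x)).toLinearMap =
      b.constr K fun w ↦ orbitProd K (w.toList.map atom) :=
    b.ext fun w ↦ by rw [b.constr_basis]; exact lift_orbitSum_basisFreeMonoid K atom w
  intro y z h
  apply b.injective_constr_of_linearIndependent (R₂ := K) hv
  rw [← hconstr]
  exact h

theorem range_lift_orbitSum (hsurj : ∀ w, IsAtom w → w ∈ Set.range atom) :
    Set.range (lift K fun x ↦ orbitSum K (atom x)) = {f | ∀ c, translate K c f = f} := by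
  set Ψ := lift K fun x ↦ orbitSum K (atom x)
  refine Set.Subset.antisymm ?_ fun f hf ↦ ?_
  · rintro _ ⟨y, rfl⟩ c
    have : (translate K c).comp Ψ = Ψ :=
      hom_ext (funext fun x ↦ by simp [Ψ, translate_orbitSum])
    exact congrArg (· y) (congrArg DFunLike.coe this)
  · rw [← AlgHom.coe_range]
    change f ∈ Subalgebra.toSubmodule Ψ.range
    refine Submodule.span_le.mpr ?_ (mem_span_orbitProd_of_forall_translate_eq K hf)
    rintro _ ⟨A, hA, rfl⟩
    refine Subalgebra.list_prod_mem _ fun p hp ↦ ?_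
    obtain ⟨a, ha, rfl⟩ := List.mem_map.mp hp
    obtain ⟨x, rfl⟩ := hsurj a (hA a ha)
    exact ⟨ι K x, lift_ι_apply _ _⟩

end FreeAlgebra

section Rotation

open FreeAlgebra (equivMonoidAlgebraFreeMonoid)
open Fin.NatCast

variable (K : Type*) [Field K] {n : ℕ} [NeZero n]

lemma isAtom_iff_head?_map_val (w : List (Fin n)) :
    IsAtom w ↔ (w.map Fin.val).head? = some 0 ∧ w.IsChain (· ≠ ·) := by
  cases w <;> simp [IsAtom, Fin.val_eq_zero_iff]

lemma equivMonoidAlgebraFreeMonoid_rotHom (p : FreeAlgebra K (Fin n)) :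
    equivMonoidAlgebraFreeMonoid (rotHom K n p) =
      translate K 1 (equivMonoidAlgebraFreeMonoid p) := by
  have : (equivMonoidAlgebraFreeMonoid : FreeAlgebra K (Fin n) ≃ₐ[K] _).toAlgHom.comp
      (rotHom K n) = (translate K 1).comp equivMonoidAlgebraFreeMonoid.toAlgHom :=
    FreeAlgebra.hom_ext (funext fun i ↦ by
      simp [rotHom, finRotate_apply, translate, equivMonoidAlgebraFreeMonoid])
  exact AlgHom.congr_fun this p

lemma equivMonoidAlgebraFreeMonoid_iterate_rotHom (m : ℕ) (p : FreeAlgebra K (Fin n)) :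
    equivMonoidAlgebraFreeMonoid ((rotHom K n)^[m] p) =
      translate K (m : Fin n) (equivMonoidAlgebraFreeMonoid p) := by
  induction m with
  | zero => simp [translate_zero]
  | succ m ih =>
    rw [Function.iterate_succ_apply', equivMonoidAlgebraFreeMonoid_rotHom, ih, translate_translate,
      Nat.cast_succ]

lemma equivMonoidAlgebraFreeMonoid_orbitPoly (w : List (Fin n)) :
    equivMonoidAlgebraFreeMonoid (orbitPoly K n w) = orbitSum K w := by
  rw [orbitPoly, map_sum, orbitSum, ← Fin.sum_univ_eq_sum_range
    (fun m ↦ equivMonoidAlgebraFreeMonoid ((rotHom K n)^[m] (wordMonomial K n w)))]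
  refine Finset.sum_congr rfl fun c _ ↦ ?_
  rw [equivMonoidAlgebraFreeMonoid_iterate_rotHom, Fin.cast_val_eq_self, wordMonomial,
    equivMonoidAlgebraFreeMonoid_prod_map_ι, translate_single]

lemma equivMonoidAlgebraFreeMonoid_lift_orbitPoly {X : Type*} (atom : X → List (Fin n))
    (y : FreeAlgebra K X) :
    equivMonoidAlgebraFreeMonoid (FreeAlgebra.lift K (fun x ↦ orbitPoly K n (atom x)) y) =
      FreeAlgebra.lift K (fun x ↦ orbitSum K (atom x)) y := by
  have : (equivMonoidAlgebraFreeMonoid : FreeAlgebra K (Fin n) ≃ₐ[K] _).toAlgHom.comp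
      (FreeAlgebra.lift K fun x ↦ orbitPoly K n (atom x)) =
      FreeAlgebra.lift K fun x ↦ orbitSum K (atom x) :=
    FreeAlgebra.hom_ext (funext fun x ↦ by simp [equivMonoidAlgebraFreeMonoid_orbitPoly])
  exact AlgHom.congr_fun this y

lemma forall_iterate_rotHom_eq_iff (p : FreeAlgebra K (Fin n)) :
    (∀ m : ℕ, (rotHom K n)^[m] p = p) ↔
      ∀ c, translate K c (equivMonoidAlgebraFreeMonoid p) = equivMonoidAlgebraFreeMonoid p := by
  refine ⟨fun h c ↦ ?_, fun h m ↦ equivMonoidAlgebraFreeMonoid.injective ?_⟩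
  · rw [← Fin.cast_val_eq_self c, ← equivMonoidAlgebraFreeMonoid_iterate_rotHom, h]
  · rw [equivMonoidAlgebraFreeMonoid_iterate_rotHom, h]

end Rotation

end CyclicInvariants

open CyclicInvariants FreeAlgebra in
theorem invariants_free_on_atom_orbitPolys_general
    (K : Type*) [Field K] (n : ℕ) (hn : 3 ≤ n) :
    Function.Injective
      ⇑(FreeAlgebra.lift K fun a : AtomWord n => orbitPoly K n a.1) ∧
    Set.range ⇑(FreeAlgebra.lift K fun a : AtomWord n => orbitPoly K n a.1) =
      {p : FreeAlgebra K (Fin n) | ∀ m : ℕ, (⇑(rotHom K n))^[m] p = p} := by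
  have : NeZero n := ⟨by omega⟩
  have hΦ (y : FreeAlgebra K (AtomWord n)) : lift K (fun a : AtomWord n ↦ orbitPoly K n a.1) y =
      equivMonoidAlgebraFreeMonoid.symm (lift K (fun a : AtomWord n ↦ orbitSum K a.1) y) :=
    AlgEquiv.eq_symm_apply _ |>.mpr (equivMonoidAlgebraFreeMonoid_lift_orbitPoly K Subtype.val y)
  refine ⟨fun y z h ↦ ?_, Set.ext fun p ↦ ?_⟩
  · rw [hΦ, hΦ] at h
    exact injective_lift_orbitSum K Subtype.val (fun a ↦ (isAtom_iff_head?_map_val a.1).mpr a.2)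
      Subtype.val_injective (equivMonoidAlgebraFreeMonoid.symm.injective h)
  · simp only [Set.mem_range, hΦ, AlgEquiv.symm_apply_eq, Set.mem_ofPred_eq,
      forall_iterate_rotHom_eq_iff]
    exact Set.ext_iff.mp (range_lift_orbitSum K Subtype.val fun w hw ↦
      ⟨⟨w, (isAtom_iff_head?_map_val w).mp hw⟩, rfl⟩) _

/-- The subalgebra `P^G` of `G`-invariant elements of the free algebra `P` is free
on the orbit polynomials of the atoms: the `K`-algebra homomorphism from the free
algebra on the set of atoms, sending each atom to its orbit polynomial, is
injective with image exactly the set of `G`-invariant elements of `P`. -/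
theorem invariants_free_on_atom_orbitPolys
    (K : Type*) [Field K] [CharZero K] (n : ℕ) (hn : 3 ≤ n) :
    Function.Injective
      ⇑(FreeAlgebra.lift K fun a : AtomWord n => orbitPoly K n a.1) ∧
    Set.range ⇑(FreeAlgebra.lift K fun a : AtomWord n => orbitPoly K n a.1) =
      {p : FreeAlgebra K (Fin n) | ∀ m : ℕ, (⇑(rotHom K n))^[m] p = p} :=
  invariants_free_on_atom_orbitPolys_general K n hn
end

section
/- In R′ one has x_1c = cx_2, x_2c = cx_3, and x_3c = cx_1; the element c³ is central in R′; c ≠ 0 and c³ ≠ 0; and c³ does not lie in the K-subalgebra of R′ generated by σ_1, σ_2, σ_3. -/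
open Finset

/-- The free algebra `P = K⟨x_1, x_2, x_3⟩` (generators indexed by `Fin 3`). -/
noncomputable abbrev P3 (K : Type*) [Field K] := FreeAlgebra K (Fin 3)

/-- The generators `x_1, x_2, x_3` of `P` (zero-based: `x3 K 0 = x_1`, etc.). -/
noncomputable def x3 (K : Type*) [Field K] (i : Fin 3) : P3 K := FreeAlgebra.ι K i

/-- The elementary polynomials `σ_1 = x_1+x_2+x_3`, `σ_2 = x_1x_2+x_1x_3+x_2x_3`,
`σ_3 = x_1x_2x_3` (zero-based indexing: `sig3 K 0 = σ_1`, etc.). -/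
noncomputable def sig3 (K : Type*) [Field K] : Fin 3 → P3 K :=
  ![x3 K 0 + x3 K 1 + x3 K 2,
    x3 K 0 * x3 K 1 + x3 K 0 * x3 K 2 + x3 K 1 * x3 K 2,
    x3 K 0 * x3 K 1 * x3 K 2]

/-- The relation identifying `x_i * σ_k` with `σ_k * x_i`; the quotient
`R′ = P/I` by the two-sided ideal `I` generated by the commutators `[x_i, σ_k]`
is `RingQuot` of this relation. -/
noncomputable def rel3 (K : Type*) [Field K] : P3 K → P3 K → Prop :=
  fun a b => ∃ i k : Fin 3, a = x3 K i * sig3 K k ∧ b = sig3 K k * x3 K i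

/-- The quotient ring `R′ = P/I`. -/
noncomputable abbrev R3 (K : Type*) [Field K] := RingQuot (rel3 K)

/-- The quotient map `P → R′`. -/
noncomputable def mk3 (K : Type*) [Field K] : P3 K →ₐ[K] R3 K :=
  RingQuot.mkAlgHom K (rel3 K)

/-- The image in `R′` of the generator `x_i`. -/
noncomputable def X3 (K : Type*) [Field K] (i : Fin 3) : R3 K := mk3 K (x3 K i)

/-- The image in `R′` of `σ_k`. -/
noncomputable def S3 (K : Type*) [Field K] (k : Fin 3) : R3 K := mk3 K (sig3 K k)

/-- The element `c = [x_1, x_2]` of `R′` (in `R′` one has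
`[x_1,x_2] = [x_2,x_3] = [x_3,x_1]`, and `c` denotes this common value). -/
noncomputable def c3 (K : Type*) [Field K] : R3 K :=
  X3 K 0 * X3 K 1 - X3 K 1 * X3 K 0

/-! ### Auxiliary: a matrix representation of `R′`.

We map `R′` into `3×3` matrices over `L[t]`, where `L = K[ω]/(ω²+ω+1)`.
With `U = diag(1,ω,ω²)` and `P` the cyclic permutation matrix, the images of
the generators are `x_1 ↦ t(U - P)`, `x_2 ↦ t(ωU - ω²P)`, `x_3 ↦ t(ω²U - ωP)`.
All three elementary symmetric polynomials map to `0`, while the image of `c³`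
is the nonzero scalar matrix `27 t⁶ · 1`. -/

open Polynomial in
noncomputable abbrev Lw (K : Type*) [Field K] := AdjoinRoot (X^2 + X + 1 : K[X])

noncomputable abbrev RK (K : Type*) [Field K] := Polynomial (Lw K)

noncomputable abbrev AK (K : Type*) [Field K] := Matrix (Fin 3) (Fin 3) (RK K)

noncomputable def om (K : Type*) [Field K] : RK K := Polynomial.C (AdjoinRoot.root _)

open Polynomial

lemma hom3 (K : Type*) [Field K] : om K ^ 2 + om K + 1 = 0 := by
  have h := AdjoinRoot.eval₂_root (X^2 + X + 1 : K[X])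
  simp [eval₂_add, eval₂_pow] at h
  have := congrArg (Polynomial.C : Lw K →+* Polynomial (Lw K)) h
  simpa [om] using this

instance ntLw (K : Type*) [Field K] : Nontrivial (Lw K) :=
  AdjoinRoot.nontrivial _ (by rw [(by compute_degree! : (X^2+X+1 : K[X]).degree = 2)]; decide)

noncomputable def Ma (K : Type*) [Field K] : AK K :=
  !![X, 0, -X; -X, om K * X, 0; 0, -X, (-1 - om K)*X]
noncomputable def Mb (K : Type*) [Field K] : AK K :=
  !![om K * X, 0, (1 + om K)*X; (1 + om K)*X, (-1 - om K)*X, 0; 0, (1 + om K)*X, X]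
noncomputable def Mc (K : Type*) [Field K] : AK K :=
  !![(-1 - om K)*X, 0, -(om K)*X; -(om K)*X, X, 0; 0, -(om K)*X, om K * X]

noncomputable def M (K : Type*) [Field K] : Fin 3 → AK K := ![Ma K, Mb K, Mc K]

lemma F1 (K : Type*) [Field K] : Ma K + Mb K + Mc K = 0 := by
  refine Matrix.ext fun i j => ?_
  fin_cases i <;> fin_cases j <;>
    simp [Ma, Mb, Mc, Matrix.add_apply, Matrix.vecHead, Matrix.vecTail] <;> ring

lemma F2 (K : Type*) [Field K] :
    Ma K * Mb K + Ma K * Mc K + Mb K * Mc K = 0 := by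
  have h := hom3 K
  rw [Ma, Mb, Mc, Matrix.mul_fin_three, Matrix.mul_fin_three, Matrix.mul_fin_three]
  refine Matrix.ext fun i j => ?_
  fin_cases i <;> fin_cases j <;>
    simp [Matrix.add_apply, Matrix.vecHead, Matrix.vecTail]
  all_goals
    first
      | ring1
      | linear_combination (-(X : RK K)^2) * h
      | linear_combination ((X : RK K)^2) * h

lemma F3 (K : Type*) [Field K] : Ma K * Mb K * Mc K = 0 := by
  have h := hom3 K
  rw [Ma, Mb, Mc, Matrix.mul_fin_three, Matrix.mul_fin_three]
  refine Matrix.ext fun i j => ?_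
  fin_cases i <;> fin_cases j <;>
    simp [Matrix.vecHead, Matrix.vecTail]
  all_goals
    first
      | ring1
      | linear_combination (-(X : RK K)^3) * h
      | linear_combination ((X : RK K)^3) * h
      | linear_combination (-(om K) * (X : RK K)^3) * h
      | linear_combination ((om K) * (X : RK K)^3) * h
      | linear_combination ((X : RK K)^3 + om K * (X : RK K)^3) * h
      | linear_combination (-(X : RK K)^3 - om K * (X : RK K)^3) * h

lemma FC (K : Type*) [Field K] :
    Ma K * Mb K - Mb K * Ma K =
      !![0, 0, 3 * om K * X^2; (-3 - 3 * om K) * X^2, 0, 0; 0, 3 * X^2, 0] := by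
  have h := hom3 K
  rw [Ma, Mb, Matrix.mul_fin_three, Matrix.mul_fin_three]
  refine Matrix.ext fun i j => ?_
  fin_cases i <;> fin_cases j <;>
    simp [Matrix.sub_apply, Matrix.vecHead, Matrix.vecTail]
  all_goals
    first
      | ring1
      | linear_combination ((X : RK K)^2) * h
      | linear_combination (-(X : RK K)^2) * h
      | linear_combination (-2 * (X : RK K)^2) * h
      | linear_combination (2 * (X : RK K)^2) * h

lemma FC3 (K : Type*) [Field K] :
    (Ma K * Mb K - Mb K * Ma K) ^ 3 =
      !![(27 : RK K) * X^6, 0, 0; 0, (27 : RK K) * X^6, 0; 0, 0, (27 : RK K) * X^6] := by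
  have h := hom3 K
  simp only [pow_succ, pow_zero, one_mul]
  rw [FC K, Matrix.mul_fin_three, Matrix.mul_fin_three]
  refine Matrix.ext fun i j => ?_
  fin_cases i <;> fin_cases j <;>
    simp [Matrix.vecHead, Matrix.vecTail]
  all_goals
    first
      | ring1
      | linear_combination (-27 * (X : RK K)^6) * h
      | linear_combination (27 * (X : RK K)^6) * h

lemma h27C (K : Type*) [Field K] : (27 : RK K) = Polynomial.C (27 : Lw K) :=
  (map_ofNat (Polynomial.C : Lw K →+* RK K) 27).symm

lemma FC3entry (K : Type*) [Field K] :
    (((Ma K * Mb K - Mb K * Ma K) ^ 3) 0 0).coeff 6 = (27 : Lw K) := by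
  rw [FC3]
  simp [h27C, Polynomial.coeff_C_mul]

/-- The representation `P → M₃(L[t])`. -/
noncomputable def phi3 (K : Type*) [Field K] : P3 K →ₐ[K] AK K :=
  FreeAlgebra.lift K (M K)

lemma phi3_x (K : Type*) [Field K] (i : Fin 3) : phi3 K (x3 K i) = M K i :=
  FreeAlgebra.lift_ι_apply _ _

lemma phi3_sig0 (K : Type*) [Field K] : phi3 K (sig3 K 0) = 0 := by
  have h : sig3 K 0 = x3 K 0 + x3 K 1 + x3 K 2 := rfl
  rw [h, map_add, map_add, phi3_x, phi3_x, phi3_x]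
  simpa [M, Matrix.vecHead, Matrix.vecTail] using F1 K

lemma phi3_sig1 (K : Type*) [Field K] : phi3 K (sig3 K 1) = 0 := by
  have h : sig3 K 1 = x3 K 0 * x3 K 1 + x3 K 0 * x3 K 2 + x3 K 1 * x3 K 2 := rfl
  rw [h, map_add, map_add, map_mul, map_mul, map_mul, phi3_x, phi3_x, phi3_x]
  simpa [M, Matrix.vecHead, Matrix.vecTail] using F2 K

lemma phi3_sig2 (K : Type*) [Field K] : phi3 K (sig3 K 2) = 0 := by
  have h : sig3 K 2 = x3 K 0 * x3 K 1 * x3 K 2 := rfl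
  rw [h, map_mul, map_mul, phi3_x, phi3_x, phi3_x]
  simpa [M, Matrix.vecHead, Matrix.vecTail] using F3 K

lemma phi3_sig (K : Type*) [Field K] (k : Fin 3) : phi3 K (sig3 K k) = 0 := by
  fin_cases k
  · exact phi3_sig0 K
  · exact phi3_sig1 K
  · exact phi3_sig2 K

lemma phi3_rel (K : Type*) [Field K] : ∀ ⦃a b : P3 K⦄, rel3 K a b → phi3 K a = phi3 K b := by
  rintro a b ⟨i, k, rfl, rfl⟩
  rw [map_mul, map_mul, phi3_sig, mul_zero, zero_mul]

/-- The induced representation `R′ → M₃(L[t])`. -/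
noncomputable def psi3 (K : Type*) [Field K] : R3 K →ₐ[K] AK K :=
  RingQuot.liftAlgHom K ⟨phi3 K, phi3_rel K⟩

lemma psi3_X (K : Type*) [Field K] (i : Fin 3) : psi3 K (X3 K i) = M K i := by
  rw [X3, mk3, psi3, RingQuot.liftAlgHom_mkAlgHom_apply, phi3_x]

lemma psi3_S (K : Type*) [Field K] (k : Fin 3) : psi3 K (S3 K k) = 0 := by
  rw [S3, mk3, psi3, RingQuot.liftAlgHom_mkAlgHom_apply, phi3_sig]

lemma psi3_c (K : Type*) [Field K] : psi3 K (c3 K) = Ma K * Mb K - Mb K * Ma K := by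
  have h0 : M K 0 = Ma K := rfl
  have h1 : M K 1 = Mb K := rfl
  rw [c3, map_sub, map_mul, map_mul, psi3_X, psi3_X, h0, h1]

/-! ### The commutation relations in `R′` -/

lemma S3_0 (K : Type*) [Field K] : S3 K 0 = X3 K 0 + X3 K 1 + X3 K 2 := by
  have : sig3 K 0 = x3 K 0 + x3 K 1 + x3 K 2 := rfl
  rw [S3, this, map_add, map_add]; rfl

lemma S3_1 (K : Type*) [Field K] :
    S3 K 1 = X3 K 0 * X3 K 1 + X3 K 0 * X3 K 2 + X3 K 1 * X3 K 2 := by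
  have : sig3 K 1 = x3 K 0 * x3 K 1 + x3 K 0 * x3 K 2 + x3 K 1 * x3 K 2 := rfl
  rw [S3, this, map_add, map_add, map_mul, map_mul, map_mul]; rfl

lemma XS3 (K : Type*) [Field K] (i k : Fin 3) : X3 K i * S3 K k = S3 K k * X3 K i := by
  rw [X3, S3, mk3, ← map_mul, ← map_mul]
  exact RingQuot.mkAlgHom_rel K ⟨i, k, rfl, rfl⟩


private lemma key1 {R : Type*} [Ring R] (a b d : R) :
    a * (a * b - b * a) - (a * b - b * a) * b =
      -(a * (a * (a + b + d) - (a + b + d) * a))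
      - b * (a * (a + b + d) - (a + b + d) * a)
      + (a * (a * b + a * d + b * d) - (a * b + a * d + b * d) * a)
      - a * (b * (a + b + d) - (a + b + d) * b)
      - b * (b * (a + b + d) - (a + b + d) * b)
      + (b * (a * b + a * d + b * d) - (a * b + a * d + b * d) * b) := by
  noncomm_ring

private lemma key2 {R : Type*} [Ring R] (a b d : R) :
    b * (a * b - b * a) - (a * b - b * a) * d =
      a * (a * (a + b + d) - (a + b + d) * a)
      + b * (a * (a + b + d) - (a + b + d) * a)
      - (a * (a * b + a * d + b * d) - (a * b + a * d + b * d) * a) := by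
  noncomm_ring

private lemma key3 {R : Type*} [Ring R] (a b d : R) :
    d * (a * b - b * a) - (a * b - b * a) * a =
      -((a * (a + b + d) - (a + b + d) * a) * b)
      + b * (a * (a + b + d) - (a + b + d) * a)
      + (b * (a + b + d) - (a + b + d) * b) * a
      + b * (b * (a + b + d) - (a + b + d) * b)
      - (b * (a * b + a * d + b * d) - (a * b + a * d + b * d) * b) := by
  noncomm_ring

section quotrel

variable (K : Type*) [Field K]

private lemma H00 : X3 K 0 * (X3 K 0 + X3 K 1 + X3 K 2)
    = (X3 K 0 + X3 K 1 + X3 K 2) * X3 K 0 := by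
  have := XS3 K 0 0; rwa [S3_0] at this

private lemma H10 : X3 K 1 * (X3 K 0 + X3 K 1 + X3 K 2)
    = (X3 K 0 + X3 K 1 + X3 K 2) * X3 K 1 := by
  have := XS3 K 1 0; rwa [S3_0] at this

private lemma H01 : X3 K 0 * (X3 K 0 * X3 K 1 + X3 K 0 * X3 K 2 + X3 K 1 * X3 K 2)
    = (X3 K 0 * X3 K 1 + X3 K 0 * X3 K 2 + X3 K 1 * X3 K 2) * X3 K 0 := by
  have := XS3 K 0 1; rwa [S3_1] at this

private lemma H11 : X3 K 1 * (X3 K 0 * X3 K 1 + X3 K 0 * X3 K 2 + X3 K 1 * X3 K 2)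
    = (X3 K 0 * X3 K 1 + X3 K 0 * X3 K 2 + X3 K 1 * X3 K 2) * X3 K 1 := by
  have := XS3 K 1 1; rwa [S3_1] at this

lemma T1 : X3 K 0 * c3 K = c3 K * X3 K 1 := by
  set a := X3 K 0
  set b := X3 K 1
  set d := X3 K 2
  have d00 : a * (a + b + d) - (a + b + d) * a = 0 := by rw [H00, sub_self]
  have d10 : b * (a + b + d) - (a + b + d) * b = 0 := by rw [H10, sub_self]
  have d01 : a * (a * b + a * d + b * d) - (a * b + a * d + b * d) * a = 0 := by
    rw [H01, sub_self]
  have d11 : b * (a * b + a * d + b * d) - (a * b + a * d + b * d) * b = 0 := by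
    rw [H11, sub_self]
  have key : a * (a * b - b * a) - (a * b - b * a) * b =
      -(a * (a * (a + b + d) - (a + b + d) * a))
      - b * (a * (a + b + d) - (a + b + d) * a)
      + (a * (a * b + a * d + b * d) - (a * b + a * d + b * d) * a)
      - a * (b * (a + b + d) - (a + b + d) * b)
      - b * (b * (a + b + d) - (a + b + d) * b)
      + (b * (a * b + a * d + b * d) - (a * b + a * d + b * d) * b) :=
    key1 a b d
  rw [d00, d10, d01, d11] at key
  simp only [mul_zero, neg_zero, add_zero, zero_add, sub_zero, zero_sub, neg_neg] at key
  have : a * (a * b - b * a) = (a * b - b * a) * b := by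
    have := sub_eq_zero.mp (by simpa using key)
    exact this
  simpa [c3] using this

lemma T2 : X3 K 1 * c3 K = c3 K * X3 K 2 := by
  set a := X3 K 0
  set b := X3 K 1
  set d := X3 K 2
  have d00 : a * (a + b + d) - (a + b + d) * a = 0 := by rw [H00, sub_self]
  have d10 : b * (a + b + d) - (a + b + d) * b = 0 := by rw [H10, sub_self]
  have d01 : a * (a * b + a * d + b * d) - (a * b + a * d + b * d) * a = 0 := by
    rw [H01, sub_self]
  have key : b * (a * b - b * a) - (a * b - b * a) * d =
      a * (a * (a + b + d) - (a + b + d) * a)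
      + b * (a * (a + b + d) - (a + b + d) * a)
      - (a * (a * b + a * d + b * d) - (a * b + a * d + b * d) * a) :=
    key2 a b d
  rw [d00, d01] at key
  simp only [mul_zero, add_zero, zero_add, sub_zero, zero_sub, neg_zero] at key
  have : b * (a * b - b * a) = (a * b - b * a) * d := by
    have := sub_eq_zero.mp (by simpa using key)
    exact this
  simpa [c3] using this

lemma T3 : X3 K 2 * c3 K = c3 K * X3 K 0 := by
  set a := X3 K 0
  set b := X3 K 1
  set d := X3 K 2
  have d00 : a * (a + b + d) - (a + b + d) * a = 0 := by rw [H00, sub_self]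
  have d10 : b * (a + b + d) - (a + b + d) * b = 0 := by rw [H10, sub_self]
  have d11 : b * (a * b + a * d + b * d) - (a * b + a * d + b * d) * b = 0 := by
    rw [H11, sub_self]
  have key : d * (a * b - b * a) - (a * b - b * a) * a =
      -((a * (a + b + d) - (a + b + d) * a) * b)
      + b * (a * (a + b + d) - (a + b + d) * a)
      + (b * (a + b + d) - (a + b + d) * b) * a
      + b * (b * (a + b + d) - (a + b + d) * b)
      - (b * (a * b + a * d + b * d) - (a * b + a * d + b * d) * b) :=
    key3 a b d
  rw [d00, d10, d11] at key
  simp only [mul_zero, zero_mul, neg_zero, add_zero, zero_add, sub_zero] at key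
  have : d * (a * b - b * a) = (a * b - b * a) * a := by
    have := sub_eq_zero.mp (by simpa using key)
    exact this
  simpa [c3] using this

end quotrel

/-! ### The main theorem -/

private lemma cyc3 {R : Type*} [Ring R] (x y z c : R)
    (h1 : x * c = c * y) (h2 : y * c = c * z) (h3 : z * c = c * x) :
    x * (c * (c * c)) = c * (c * c) * x := by
  calc x * (c * (c * c)) = (x * c) * (c * c) := by noncomm_ring
    _ = (c * y) * (c * c) := by rw [h1]
    _ = c * ((y * c) * c) := by noncomm_ring
    _ = c * ((c * z) * c) := by rw [h2]
    _ = (c * c) * (z * c) := by noncomm_ring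
    _ = (c * c) * (c * x) := by rw [h3]
    _ = c * (c * c) * x := by noncomm_ring

/-- In `R′` (case `n = 3`): `x_1c = cx_2`, `x_2c = cx_3`, `x_3c = cx_1`; `c³` is
central; `c ≠ 0` and `c³ ≠ 0`; and `c³` does not lie in the `K`-subalgebra of
`R′` generated by `σ_1, σ_2, σ_3`. -/
theorem c_properties (K : Type*) [Field K] [CharZero K] :
    X3 K 0 * c3 K = c3 K * X3 K 1 ∧
    X3 K 1 * c3 K = c3 K * X3 K 2 ∧
    X3 K 2 * c3 K = c3 K * X3 K 0 ∧
    (c3 K) ^ 3 ∈ Subalgebra.center K (R3 K) ∧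
    c3 K ≠ 0 ∧ (c3 K) ^ 3 ≠ 0 ∧
    (c3 K) ^ 3 ∉ Algebra.adjoin K {S3 K 0, S3 K 1, S3 K 2} := by
  -- commutation of c³ with the generators
  have hpow : (c3 K) ^ 3 = c3 K * (c3 K * c3 K) := by
    rw [pow_succ, pow_succ, pow_one, mul_assoc]
  have p0 : X3 K 0 * (c3 K) ^ 3 = (c3 K) ^ 3 * X3 K 0 := by
    rw [hpow]; exact cyc3 _ _ _ _ (T1 K) (T2 K) (T3 K)
  have p1 : X3 K 1 * (c3 K) ^ 3 = (c3 K) ^ 3 * X3 K 1 := by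
    rw [hpow]; exact cyc3 _ _ _ _ (T2 K) (T3 K) (T1 K)
  have p2 : X3 K 2 * (c3 K) ^ 3 = (c3 K) ^ 3 * X3 K 2 := by
    rw [hpow]; exact cyc3 _ _ _ _ (T3 K) (T1 K) (T2 K)
  have pX : ∀ i : Fin 3, X3 K i * (c3 K) ^ 3 = (c3 K) ^ 3 * X3 K i := by
    intro i
    fin_cases i
    · exact p0
    · exact p1
    · exact p2
  -- centrality of c³
  have hcent : (c3 K) ^ 3 ∈ Subalgebra.center K (R3 K) := by
    refine Subalgebra.mem_center_iff.mpr ?_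
    intro g
    obtain ⟨p, rfl⟩ := RingQuot.mkAlgHom_surjective K (rel3 K) g
    induction p using FreeAlgebra.induction with
    | grade0 r =>
      rw [AlgHom.commutes]
      exact Algebra.commutes r _
    | grade1 i =>
      exact pX i
    | mul p q hp hq =>
      rw [map_mul, mul_assoc, hq, ← mul_assoc, hp, mul_assoc]
    | add p q hp hq =>
      rw [map_add, add_mul, hp, hq, mul_add]
  -- non-membership of c³ in the subalgebra generated by the σ's
  have hno : (c3 K) ^ 3 ∉ Algebra.adjoin K {S3 K 0, S3 K 1, S3 K 2} := by
    intro hmem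
    have h1 : psi3 K ((c3 K) ^ 3) ∈
        (Algebra.adjoin K {S3 K 0, S3 K 1, S3 K 2}).map (psi3 K) :=
      ⟨_, hmem, rfl⟩
    rw [AlgHom.map_adjoin] at h1
    have himg : psi3 K '' {S3 K 0, S3 K 1, S3 K 2} ⊆ {(0 : AK K)} := by
      intro y hy
      obtain ⟨x, hx, rfl⟩ := hy
      have hx' : x = S3 K 0 ∨ x = S3 K 1 ∨ x = S3 K 2 := by simpa using hx
      rcases hx' with rfl | rfl | rfl <;> simp [psi3_S]
    have h2 : psi3 K ((c3 K) ^ 3) ∈ Algebra.adjoin K ({(0 : AK K)} : Set (AK K)) :=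
      Algebra.adjoin_mono himg h1
    have hbot : Algebra.adjoin K ({(0 : AK K)} : Set (AK K)) ≤ ⊥ := by
      refine Algebra.adjoin_le ?_
      intro x hx
      rcases hx with rfl
      exact zero_mem (⊥ : Subalgebra K (AK K))
    obtain ⟨k, hk⟩ := Algebra.mem_bot.mp (hbot h2)
    have hψ : psi3 K ((c3 K) ^ 3) = (Ma K * Mb K - Mb K * Ma K) ^ 3 := by
      rw [map_pow, psi3_c]
    have e1 := congrArg (fun m : AK K => (m 0 0).coeff 6) (hk.trans hψ)
    rw [FC3entry] at e1
    have halg : ((algebraMap K (AK K)) k 0 0).coeff 6 = 0 := by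
      rw [Matrix.algebraMap_matrix_apply]
      simp [Polynomial.algebraMap_apply, Polynomial.coeff_C]
    rw [halg] at e1
    haveI : CharZero (Lw K) :=
      charZero_of_injective_algebraMap (algebraMap K (Lw K)).injective
    exact (by norm_num : (27 : Lw K) ≠ 0) e1.symm
  have hc3ne : (c3 K) ^ 3 ≠ 0 := by
    intro h
    exact hno (h ▸ zero_mem _)
  have hcne : c3 K ≠ 0 := by
    intro h
    apply hc3ne
    rw [h, pow_succ, mul_zero]
  exact ⟨T1 K, T2 K, T3 K, hcent, hcne, hc3ne, hno⟩
end

section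
/- In R′, the element c commutes with none of x_1, x_2, x_3: [x_i, c] ≠ 0 in R′ for i = 1, 2, 3. Equivalently (since \overline{x_1x_2} = x_1x_2 + x_2x_3 + x_3x_1 = c + σ_2), the orbit polynomial \overline{x_1x_2} commutes with none of x_1, x_2, x_3. -/
open Finset

section Aux

noncomputable def M3w (K : Type*) [Field K] : Fin 3 → Matrix (Fin 2) (Fin 2) K :=
  ![!![-2,-2;0,0], !![2,0;-2,0], !![0,2;2,0]]

noncomputable def phi3w (K : Type*) [Field K] :
    P3 K →ₐ[K] Matrix (Fin 2) (Fin 2) K :=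
  FreeAlgebra.lift K (M3w K)

lemma phi3w_x (K : Type*) [Field K] (i : Fin 3) : phi3w K (x3 K i) = M3w K i := by
  simp [phi3w, x3]

lemma M3w_mul_comm (K : Type*) [Field K] (i k : Fin 3) :
    M3w K i * phi3w K (sig3 K k) = phi3w K (sig3 K k) * M3w K i := by
  fin_cases i <;> fin_cases k <;>
    simp only [sig3, M3w, phi3w, Matrix.cons_val_zero, Matrix.cons_val_one, Matrix.head_cons,
      map_add, map_mul, x3, FreeAlgebra.lift_ι_apply, Matrix.cons_val_fin_one] <;>
    ext a b <;> fin_cases a <;> fin_cases b <;>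
    simp [Matrix.mul_apply, Fin.sum_univ_succ] <;> ring

lemma phi3w_rel (K : Type*) [Field K] ⦃a b : P3 K⦄ (h : rel3 K a b) :
    phi3w K a = phi3w K b := by
  obtain ⟨i, k, rfl, rfl⟩ := h
  simp only [map_mul, phi3w_x]
  exact M3w_mul_comm K i k

noncomputable def psi3w (K : Type*) [Field K] : R3 K →ₐ[K] Matrix (Fin 2) (Fin 2) K :=
  RingQuot.liftAlgHom K ⟨phi3w K, phi3w_rel K⟩

lemma psi3w_X (K : Type*) [Field K] (i : Fin 3) : psi3w K (X3 K i) = M3w K i := by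
  rw [X3, mk3, psi3w, RingQuot.liftAlgHom_mkAlgHom_apply, phi3w_x]

end Aux

/-- In `R′` (case `n = 3`), `c` commutes with none of `x_1, x_2, x_3`, and
equivalently (since `\overline{x_1x_2} = x_1x_2 + x_2x_3 + x_3x_1 = c + σ_2`)
the orbit polynomial `\overline{x_1x_2}` commutes with none of `x_1, x_2, x_3`. -/



theorem c_commutes_with_no_generator (K : Type*) [Field K] [CharZero K] :
    (∀ i : Fin 3, X3 K i * c3 K ≠ c3 K * X3 K i) ∧
    (∀ i : Fin 3,
      X3 K i * (X3 K 0 * X3 K 1 + X3 K 1 * X3 K 2 + X3 K 2 * X3 K 0) ≠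
        (X3 K 0 * X3 K 1 + X3 K 1 * X3 K 2 + X3 K 2 * X3 K 0) * X3 K i) := by
  constructor <;> intro i h <;>
    have h2 := congrArg (fun z => psi3w K z 0 0) h <;>
    simp only [c3, map_mul, map_sub, map_add, psi3w_X] at h2 <;>
    fin_cases i <;>
    simp [M3w, Matrix.mul_apply, Fin.sum_univ_succ] at h2 <;>
    norm_num at h2
end
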